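/- arXiv:2512.23599 — 13 statements merged into one kernel-verified Lean document; each statement's English description precedes it below -/
import Mathlib

section
/- Let n ≥ 2 and let w : ∏_k A_k → ∏_k X_k be non-self-signaling. Then: (i) if w is an n-partite process function, then for every party k and every map f_k : X_k → A_k the reduced function w^{f_k} : ∏_{j≠k} A_j → ∏_{j≠k} X_j is an (n−1)-partite process function; and (ii) if there exists a party k such that for every map f_k : X_k → A_k the reduced function w^{f_k} is an (n−1)-partite process function, then w is an n-partite process function. -/
noncomputable section

/-- A (multipartite) process function over an index type `ι`: for every local
intervention `f = (f_k)_k` (each `f_k : X_k → A_k`) there is exactly one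
fixed point `x ∈ ∏_k X_k` with `w (f (x)) = x` (unique fixed-point property). -/
def IsProcessFunction {ι : Type} {A X : ι → Type}
    (w : (∀ k, A k) → ∀ k, X k) : Prop :=
  ∀ f : ∀ k, X k → A k, ∃! x : ∀ k, X k, (w fun k => f k (x k)) = x

/-- `w` is non-self-signaling: its `k`-th component does not depend on the
`k`-th party's own output. -/
def NonSelfSignaling {ι : Type} {A X : ι → Type}
    (w : (∀ k, A k) → ∀ k, X k) : Prop :=
  ∀ (k : ι) (a a' : ∀ j, A j), (∀ j, j ≠ k → a j = a' j) → w a k = w a' k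

/-- Extend a family defined on `{j // j ≠ k}` by a value at `k`. -/
def extendAt {ι : Type} [DecidableEq ι] {A : ι → Type} (k : ι)
    (a : ∀ j : {j : ι // j ≠ k}, A j) (b : A k) : ∀ j, A j :=
  fun j => if h : j = k then cast (congrArg A h).symm b else a ⟨j, h⟩

/-- The `k`-th component of a (non-self-signaling) `w`, as a function
`w_k : ∏_{j ≠ k} A_j → X_k` of the other parties' outputs. -/
def component {ι : Type} [DecidableEq ι] {A X : ι → Type}
    [∀ k, Nonempty (A k)] (w : (∀ k, A k) → ∀ k, X k) (k : ι)
    (a : ∀ j : {j : ι // j ≠ k}, A j) : X k :=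
  w (extendAt k a (Classical.arbitrary (A k))) k

/-- The reduced function `w^{f_k} : ∏_{j≠k} A_j → ∏_{j≠k} X_j`, defined by
`w^{f_k}(a_{∖k}) = w_{∖k}(a_{∖k}, f_k(w_k(a_{∖k})))`. -/
def reducedFn {ι : Type} [DecidableEq ι] {A X : ι → Type}
    [∀ k, Nonempty (A k)] (w : (∀ k, A k) → ∀ k, X k) (k : ι)
    (f : X k → A k) (a : ∀ j : {j : ι // j ≠ k}, A j) :
    ∀ j : {j : ι // j ≠ k}, X j :=
  fun j => w (extendAt k a (f (component w k a))) j

/-- The output-reduced function `w^{a_k}`: the reduced function of the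
constant intervention `f_k ≡ b`, `w^{b}(a_{∖k}) = w_{∖k}(a_{∖k}, b)`. -/
def outputReducedFn {ι : Type} [DecidableEq ι] {A X : ι → Type}
    [∀ k, Nonempty (A k)] (w : (∀ k, A k) → ∀ k, X k) (k : ι) (b : A k) :
    (∀ j : {j : ι // j ≠ k}, A j) → ∀ j : {j : ι // j ≠ k}, X j :=
  reducedFn w k (fun _ => b)

section Aux

variable {ι : Type} [DecidableEq ι] {A X : ι → Type}

lemma extendAt_same (k : ι) (a : ∀ j : {j : ι // j ≠ k}, A j) (b : A k) :
    extendAt k a b k = b := by simp [extendAt]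

lemma extendAt_ne (k : ι) (a : ∀ j : {j : ι // j ≠ k}, A j) (b : A k)
    {j : ι} (h : j ≠ k) : extendAt k a b j = a ⟨j, h⟩ := by
  simp [extendAt, h]

/-- Any intervention output splits through `extendAt` at any party `k`. -/
lemma Fkey (k : ι) (F : ∀ j, X j → A j) (x : ∀ j, X j) :
    (fun j => F j (x j))
      = extendAt k (fun j : {j : ι // j ≠ k} => F j (x j)) (F k (x k)) := by
  funext j
  by_cases h : j = k
  · subst h; rw [extendAt_same]
  · rw [extendAt_ne _ _ _ h]

variable [∀ k, Nonempty (A k)]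

lemma component_eq {w : (∀ k, A k) → ∀ k, X k} (hw : NonSelfSignaling w)
    (k : ι) (a : ∀ j : {j : ι // j ≠ k}, A j) (b : A k) :
    component w k a = w (extendAt k a b) k := by
  apply hw
  intro j hj
  rw [extendAt_ne _ _ _ hj, extendAt_ne _ _ _ hj]

lemma fixed_k {w : (∀ k, A k) → ∀ k, X k} (hw : NonSelfSignaling w)
    (k : ι) (F : ∀ j, X j → A j) {x : ∀ j, X j}
    (hx : w (fun j => F j (x j)) = x) :
    x k = component w k (fun j : {j : ι // j ≠ k} => F j (x j)) := by
  rw [component_eq hw k _ (F k (x k)), ← Fkey, hx]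

/-- The restriction of a fixed point of `w` under `F` is a fixed point of the
reduced function under the restricted intervention. -/
lemma restrict_fixed {w : (∀ k, A k) → ∀ k, X k} (hw : NonSelfSignaling w)
    (k : ι) (F : ∀ j, X j → A j) {x : ∀ j, X j}
    (hx : w (fun j => F j (x j)) = x) :
    reducedFn w k (F k) (fun j : {j : ι // j ≠ k} => F j (x j))
      = fun j : {j : ι // j ≠ k} => x j := by
  have hc := (fixed_k hw k F hx).symm
  funext j
  simp only [reducedFn]
  rw [hc, ← Fkey, hx]

/-- The extension (by the appropriate `component` value) of a fixed point of a
reduced function is a fixed point of `w`. -/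
lemma extend_fixed {w : (∀ k, A k) → ∀ k, X k} (hw : NonSelfSignaling w)
    (k : ι) (F : ∀ j, X j → A j) {y : ∀ j : {j : ι // j ≠ k}, X j}
    (hy : reducedFn w k (F k) (fun j => F j (y j)) = y) :
    w (fun j => F j
        (extendAt k y (component w k (fun j : {j : ι // j ≠ k} => F j (y j))) j))
      = extendAt k y (component w k (fun j : {j : ι // j ≠ k} => F j (y j))) := by
  set a : ∀ j : {j : ι // j ≠ k}, A j := fun j => F j (y j) with ha
  set c : X k := component w k a with hcc
  set x : ∀ j, X j := extendAt k y c with hx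
  have hrestr : (fun j : {j : ι // j ≠ k} => F j (x j)) = a := by
    funext j
    have : x (j : ι) = y j := by
      rw [hx, extendAt_ne _ _ _ j.2]
    rw [this]
  have hFx : (fun j => F j (x j)) = extendAt k a (F k c) := by
    rw [Fkey k F x, hrestr]
    congr 1
    rw [hx, extendAt_same]
  rw [hFx]
  funext j
  by_cases h : j = k
  · subst h
    rw [← component_eq hw, ← hcc, hx, extendAt_same]
  · have : w (extendAt k a (F k c)) j = reducedFn w k (F k) a ⟨j, h⟩ := rfl
    rw [this, hy, hx, extendAt_ne _ _ _ h]

end Aux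

/-- **Lemma 1 (recursive characterization via all reductions)**:
(i) if a non-self-signaling `w` is an `n`-partite process function then for
every party `k` and every local operation `f_k : X_k → A_k` the reduced
function `w^{f_k}` is an `(n−1)`-partite process function; and
(ii) if there exists a party `k` such that `w^{f_k}` is an `(n−1)`-partite
process function for every local operation `f_k`, then `w` is an `n`-partite
process function. -/
theorem reductions_characterize_processFunction
    {n : ℕ} (hn : 2 ≤ n)
    (A X : Fin n → Type) [∀ k, Fintype (A k)] [∀ k, Nonempty (A k)]
    [∀ k, Fintype (X k)] [∀ k, Nonempty (X k)]
    (w : (∀ k, A k) → ∀ k, X k) (hw : NonSelfSignaling w) :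
    (IsProcessFunction w →
      ∀ (k : Fin n) (f : X k → A k), IsProcessFunction (reducedFn w k f)) ∧
    ((∃ k : Fin n, ∀ f : X k → A k, IsProcessFunction (reducedFn w k f)) →
      IsProcessFunction w) := by
  classical
  constructor
  · -- (i)
    intro hpf k f g
    set F : ∀ j, X j → A j := fun j =>
      if h : j = k then fun xj => cast (congrArg A h).symm (f (cast (congrArg X h) xj))
      else fun xj => g ⟨j, h⟩ xj with hF
    have hFk : F k = f := by
      funext b; simp [hF]
    have hFg : ∀ (y : ∀ j : {j : Fin n // j ≠ k}, X j),
        (fun j : {j : Fin n // j ≠ k} => F j (y j)) = fun j => g j (y j) := by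
      intro y; funext j
      have hj := j.2
      simp [hF, hj]
    obtain ⟨x, hx, hxu⟩ := hpf F
    refine ⟨fun j : {j : Fin n // j ≠ k} => x j, ?_, ?_⟩
    · have h1 := restrict_fixed hw k F hx
      rw [hFk, hFg] at h1
      exact h1
    · intro y' hy'
      have hy'' : reducedFn w k (F k) (fun j => F j (y' j)) = y' := by
        rw [hFk, hFg]; exact hy'
      have hfix := extend_fixed hw k F hy''
      have hx'eq := hxu _ hfix
      funext j
      rw [← hx'eq, extendAt_ne _ _ _ j.2]
  · -- (ii)
    rintro ⟨k, hk⟩ F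
    obtain ⟨y, hy, hyu⟩ := hk (F k) (fun j xj => F j xj)
    have hy' : reducedFn w k (F k) (fun j : {j : Fin n // j ≠ k} => F j (y j)) = y := hy
    set c : X k := component w k (fun j : {j : Fin n // j ≠ k} => F j (y j)) with hc
    refine ⟨extendAt k y c, extend_fixed hw k F hy', ?_⟩
    intro x' hx'
    have hres := restrict_fixed hw k F hx'
    have hyeq : (fun j : {j : Fin n // j ≠ k} => x' j) = y := hyu _ hres
    have hxk : x' k = c := by
      rw [fixed_k hw k F hx', hc]
      congr 1
      funext j
      rw [congrFun hyeq j]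
    funext j
    by_cases h : j = k
    · subst h; rw [extendAt_same, ← hxk]
    · rw [extendAt_ne _ _ _ h, ← congrFun hyeq ⟨j, h⟩]

end
end

section
/- Let n ≥ 2, let I_1,…,I_n and X_1,…,X_n be finite nonempty sets, and let w : ∏_k I_k → ∏_k X_k be a function whose components w_l : ∏_{k≠l} I_k → X_l (each independent of i_l) are all non-constant. Then every n-party causal correlation P with input sets I_k and output sets O_l = X_l satisfies the causal inequality (1/∏_k |I_k|) · Σ_{i ∈ ∏_k I_k} P(o = w(i) | i) ≤ 1 − 1/∏_k |I_k|, where 'o = w(i)' means o_l = w_l(i_{∖l}) for every party l. In particular, the causal bound β^C of the 'guess the process function w' game equals 1 − 1/∏_k |I_k| < 1. -/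
open scoped BigOperators

/-- An `ι`-party correlation with input sets `I k` and output sets `O k`:
pointwise nonnegative and normalized for every joint input. -/
def IsCorrelation {ι : Type} [Fintype ι] [DecidableEq ι] {I O : ι → Type}
    [∀ k, Fintype (I k)] [∀ k, Fintype (O k)]
    (P : (∀ k, O k) → (∀ k, I k) → ℝ) : Prop :=
  (∀ o i, 0 ≤ P o i) ∧ (∀ i, ∑ o : ∀ k, O k, P o i = 1)

/-- Causal correlations, defined by recursion on the number of parties:
every 1-party correlation is causal; an `n`-party correlation (`n ≥ 2`) is
causal if it decomposes as
`P(o|i) = Σ_k q_k · P_k(o_k|i_k) · P_{k,i_k,o_k}(o_{∖k}|i_{∖k})`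
with weights `q_k ≥ 0`, `Σ_k q_k = 1`, 1-party correlations `P_k`, and
`(n−1)`-party causal correlations `P_{k,i_k,o_k}`. -/
inductive IsCausal :
    ∀ {ι : Type} [Fintype ι] [DecidableEq ι] {I O : ι → Type}
      [∀ k, Fintype (I k)] [∀ k, Fintype (O k)],
      ((∀ k, O k) → (∀ k, I k) → ℝ) → Prop
  | base {ι : Type} [Fintype ι] [DecidableEq ι] {I O : ι → Type}
      [∀ k, Fintype (I k)] [∀ k, Fintype (O k)]
      (hcard : Fintype.card ι = 1)
      (P : (∀ k, O k) → (∀ k, I k) → ℝ) (hP : IsCorrelation P) :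
      IsCausal P
  | step {ι : Type} [Fintype ι] [DecidableEq ι] {I O : ι → Type}
      [∀ k, Fintype (I k)] [∀ k, Fintype (O k)]
      (hcard : 2 ≤ Fintype.card ι)
      (P : (∀ k, O k) → (∀ k, I k) → ℝ) (hP : IsCorrelation P)
      (q : ι → ℝ) (hq : ∀ k, 0 ≤ q k) (hq1 : ∑ k, q k = 1)
      (Pk : ∀ k, O k → I k → ℝ)
      (hPk : ∀ k, (∀ o i, 0 ≤ Pk k o i) ∧ ∀ i : I k, ∑ o : O k, Pk k o i = 1)
      (Q : ∀ k : ι, I k → O k →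
        ((∀ j : {j : ι // j ≠ k}, O j) → (∀ j : {j : ι // j ≠ k}, I j) → ℝ))
      (hQ : ∀ k i o, IsCausal (Q k i o))
      (hdec : ∀ o i, P o i =
        ∑ k, q k * Pk k (o k) (i k) *
          Q k (i k) (o k) (fun j => o j) (fun j => i j)) :
      IsCausal P

/-- A causal correlation is a correlation. -/
lemma IsCausal.isCorrelation {ι : Type} [Fintype ι] [DecidableEq ι] {I O : ι → Type}
    [∀ k, Fintype (I k)] [∀ k, Fintype (O k)]
    {P : (∀ k, O k) → (∀ k, I k) → ℝ} (h : IsCausal P) : IsCorrelation P := by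
  cases h with
  | base hcard P hP => exact hP
  | step hcard P hP q hq hq1 Pk hPk Q hQ hdec => exact hP

/-- Fiber-counting bound: if `g` is non-constant and `p` is a probability
distribution, then `∑ a, p (g a) ≤ |A| - 1`. -/
lemma fiber_sum_le {A B : Type} [Fintype A] [Fintype B] [DecidableEq B]
    (g : A → B) (hg : ∃ a a', g a ≠ g a')
    (p : B → ℝ) (hp : ∀ b, 0 ≤ p b) (hs : ∑ b, p b = 1) :
    ∑ a, p (g a) ≤ (Fintype.card A : ℝ) - 1 := by
  obtain ⟨a₀, a₁, hne⟩ := hg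
  have hfib : ∀ b : B,
      (((Finset.univ.filter (fun a => g a = b)).card : ℝ)) ≤ (Fintype.card A : ℝ) - 1 := by
    intro b
    have hmem : ∃ a, a ∉ Finset.univ.filter (fun a => g a = b) := by
      by_cases h0 : g a₀ = b
      · exact ⟨a₁, by simp only [Finset.mem_filter]; exact fun h => hne (by rw [h0, h.2])⟩
      · exact ⟨a₀, by simp [h0]⟩
    obtain ⟨a, ha⟩ := hmem
    have hne' : Finset.univ.filter (fun a => g a = b) ≠ Finset.univ :=
      fun hE => ha (by rw [hE]; exact Finset.mem_univ a)
    have hssub : Finset.univ.filter (fun a => g a = b) ⊂ Finset.univ :=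
      Finset.ssubset_univ_iff.mpr hne'
    have hlt : (Finset.univ.filter (fun a => g a = b)).card < Fintype.card A :=
      (Finset.card_lt_card hssub).trans_eq Finset.card_univ
    have : (Finset.univ.filter (fun a => g a = b)).card + 1 ≤ Fintype.card A := hlt
    have := (Nat.cast_le (α := ℝ)).mpr this
    push_cast at this
    linarith
  have hfw : ∑ a, p (g a)
      = ∑ b : B, ∑ a ∈ Finset.univ.filter (fun a => g a = b), p b :=
    (Finset.sum_fiberwise' Finset.univ g p).symm
  rw [hfw]
  calc ∑ b : B, ∑ a ∈ Finset.univ.filter (fun a => g a = b), p b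
      = ∑ b : B, ((Finset.univ.filter (fun a => g a = b)).card : ℝ) * p b := by
        simp [Finset.sum_const, nsmul_eq_mul]
    _ ≤ ∑ b : B, ((Fintype.card A : ℝ) - 1) * p b := by
        refine Finset.sum_le_sum fun b _ => ?_
        exact mul_le_mul_of_nonneg_right (hfib b) (hp b)
    _ = (Fintype.card A : ℝ) - 1 := by rw [← Finset.mul_sum, hs, mul_one]

/-- **The causal bound of the "guess the process function" game**
(Lemma 2): for any function `w : ∏_k I_k → ∏_k X_k` whose components
`w_l : ∏_{k≠l} I_k → X_l` are all non-constant, every causal correlation `P`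
(with outputs `O_l = X_l`) satisfies
`(1/∏_k |I_k|) Σ_i P(o = w(i)|i) ≤ 1 − 1/∏_k |I_k|`, a bound strictly
smaller than `1`. -/
theorem causal_bound_guess_the_process
    {n : ℕ} (hn : 2 ≤ n)
    (I X : Fin n → Type) [∀ k, Fintype (I k)] [∀ k, Nonempty (I k)]
    [∀ k, Fintype (X k)] [∀ k, Nonempty (X k)]
    (w : ∀ l : Fin n, (∀ k : {k : Fin n // k ≠ l}, I k) → X l)
    (hw : ∀ l : Fin n, ∃ a a', w l a ≠ w l a')
    (P : (∀ k, X k) → (∀ k, I k) → ℝ)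
    (hP : IsCorrelation P) (hC : IsCausal P) :
    (∑ i : ∀ k, I k, P (fun l => w l (fun k => i k)) i) /
        (∏ k, (Fintype.card (I k) : ℝ)) ≤
      1 - 1 / ∏ k, (Fintype.card (I k) : ℝ) ∧
    (1 - 1 / ∏ k, (Fintype.card (I k) : ℝ) : ℝ) < 1 := by

  classical
  have hNpos : (0:ℝ) < ∏ k, (Fintype.card (I k) : ℝ) :=
    Finset.prod_pos fun k _ => by exact_mod_cast Fintype.card_pos
  set N : ℝ := ∏ k, (Fintype.card (I k) : ℝ) with hNdef
  refine ⟨?_, by linarith [one_div_pos.mpr hNpos]⟩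
  -- it suffices to show the numerator is ≤ N - 1
  rw [div_le_iff₀ hNpos]
  have hmul : (1 - 1 / N) * N = N - 1 := by field_simp
  rw [hmul]
  -- extract the causal decomposition
  cases hC with
  | base hcard P hP' =>
    exfalso
    simp only [Fintype.card_fin] at hcard
    omega
  | step hcard P hP' q hq hq1 Pk hPk Q hQ hdec =>
    -- each Q value lies in [0,1]
    have hQ01 : ∀ (k : Fin n) (i : I k) (o : X k) o' i', Q k i o o' i' ≤ 1 := by
      intro k i o o' i'
      obtain ⟨hQ0, hQ1⟩ := (hQ k i o).isCorrelation
      calc Q k i o o' i' ≤ ∑ o'' , Q k i o o'' i' :=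
            Finset.single_le_sum (fun o'' _ => hQ0 o'' i') (Finset.mem_univ o')
        _ = 1 := hQ1 i'
    -- pointwise bound on the winning probability
    have key : ∀ i : ∀ k, I k, P (fun l => w l (fun k => i k)) i ≤
        ∑ k, q k * Pk k (w k (fun j => i j)) (i k) := by
      intro i
      rw [hdec]
      refine Finset.sum_le_sum fun k _ => ?_
      have h0 : 0 ≤ q k * Pk k (w k (fun j => i j)) (i k) :=
        mul_nonneg (hq k) ((hPk k).1 _ _)
      calc q k * Pk k (w k (fun j => i j)) (i k) *
            Q k (i k) (w k (fun j => i j)) (fun j => w j (fun k' => i k')) (fun j => i j)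
          ≤ q k * Pk k (w k (fun j => i j)) (i k) * 1 :=
            mul_le_mul_of_nonneg_left (hQ01 _ _ _ _ _) h0
        _ = q k * Pk k (w k (fun j => i j)) (i k) := mul_one _
    -- for each k, bound the sum over all inputs
    have hsumk : ∀ k : Fin n,
        ∑ i : ∀ j, I j, Pk k (w k (fun j => i j)) (i k) ≤ N - 1 := by
      intro k
      -- split the sum using the equivalence
      have hsplit : ∑ i : ∀ j, I j, Pk k (w k (fun j => i j)) (i k)
          = ∑ x : I k, ∑ a : (∀ j : {j : Fin n // j ≠ k}, I j), Pk k (w k a) x := by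
        rw [← Equiv.sum_comp (Equiv.piSplitAt k I).symm
          (fun i => Pk k (w k (fun j => i j)) (i k)), Fintype.sum_prod_type]
        refine Finset.sum_congr rfl fun x _ => Finset.sum_congr rfl fun a _ => ?_
        have h1 : (Equiv.piSplitAt k I).symm (x, a) k = x := by
          simp [Equiv.piSplitAt_symm_apply]
        have h2 : (fun j : {j : Fin n // j ≠ k} =>
            (Equiv.piSplitAt k I).symm (x, a) j) = a := by
          funext j
          simp [Equiv.piSplitAt_symm_apply, j.2]
        rw [h1, h2]
      rw [hsplit]
      set M : ℕ := Fintype.card (∀ j : {j : Fin n // j ≠ k}, I j) with hMdef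
      have hinner : ∀ x : I k,
          ∑ a : (∀ j : {j : Fin n // j ≠ k}, I j), Pk k (w k a) x ≤ (M : ℝ) - 1 := by
        intro x
        exact fiber_sum_le (w k) (hw k) (fun b => Pk k b x)
          (fun b => (hPk k).1 b x) ((hPk k).2 x)
      calc ∑ x : I k, ∑ a : (∀ j : {j : Fin n // j ≠ k}, I j), Pk k (w k a) x
          ≤ ∑ _x : I k, ((M : ℝ) - 1) := Finset.sum_le_sum fun x _ => hinner x
        _ = (Fintype.card (I k) : ℝ) * ((M : ℝ) - 1) := by
            rw [Finset.sum_const, nsmul_eq_mul, Finset.card_univ]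
        _ = (Fintype.card (I k) : ℝ) * (M : ℝ) - (Fintype.card (I k) : ℝ) := by ring
        _ ≤ N - 1 := by
            have hNM : (Fintype.card (I k) : ℝ) * (M : ℝ) = N := by
              have hM : M = ∏ j ∈ Finset.univ.erase k, Fintype.card (I j) := by
                rw [hMdef, Fintype.card_pi]
                exact (Finset.prod_subtype (Finset.univ.erase k)
                  (fun x => by simp) (fun j => Fintype.card (I j))).symm
              have hNnat : Fintype.card (I k) * M = ∏ j, Fintype.card (I j) := by
                rw [hM]
                exact Finset.mul_prod_erase Finset.univ
                  (fun j => Fintype.card (I j)) (Finset.mem_univ k)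
              rw [hNdef, ← Nat.cast_prod, ← hNnat, Nat.cast_mul]
            have hcard1 : (1:ℝ) ≤ (Fintype.card (I k) : ℝ) := by
              exact_mod_cast Fintype.card_pos
            linarith
    calc ∑ i : ∀ j, I j, P (fun l => w l (fun j => i j)) i
        ≤ ∑ i : ∀ j, I j, ∑ k, q k * Pk k (w k (fun j => i j)) (i k) :=
          Finset.sum_le_sum fun i _ => key i
      _ = ∑ k, q k * ∑ i : ∀ j, I j, Pk k (w k (fun j => i j)) (i k) := by
          rw [Finset.sum_comm]
          exact Finset.sum_congr rfl fun k _ => by rw [Finset.mul_sum]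
      _ ≤ ∑ k, q k * (N - 1) := by
          refine Finset.sum_le_sum fun k _ => ?_
          exact mul_le_mul_of_nonneg_left (hsumk k) (hq k)
      _ = N - 1 := by rw [← Finset.sum_mul, hq1, one_mul]
end

section
/- Let n ≥ 1 and let an unambiguous complete product basis be given. Then: (a) every outcome string a ∈ ∏_k A_k occurs as the outcome string a^j of exactly one event j, so there is a unique function w : ∏_k A_k → ∏_k X_k with w(a^j) = x^j for every event j; and (b) this unique induced function w is an n-partite process function: for every family f = (f_k)_k of maps f_k : X_k → A_k there is exactly one x ∈ ∏_k X_k with w(f(x)) = x. -/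
/-!
If two product vectors are orthogonal, one factor is orthogonal; the two local vectors there are
distinct (they are nonzero), so by unambiguity that party used the same setting and obtained
different outcomes. Hence distinct events have distinct outcome strings, which together with
`N = ∏ₖ |Aₖ|` makes `j ↦ aʲ` a bijection, and no intervention `f` is consistent (`aʲ = f(xʲ)`)
with two events. Each event is consistent with `∏ₖ |Aₖ|^(|Xₖ|-1)` interventions, and `N` times this
is the number of all interventions, so every `f` is consistent with exactly one event. The fixed
points of `x ↦ w(f(x))` are precisely the settings of the events consistent with `f`.
-/

open Function

theorem Nat.card_subtype_apply_eq {α β : Type*} [Finite α] (a : α) (b : β) :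
    Nat.card {g : α → β // g a = b} = Nat.card β ^ (Nat.card α - 1) := by
  classical
  cases nonempty_fintype α
  let restrict : {g : α → β // g a = b} ≃ ({x // x ≠ a} → β) :=
    { toFun g x := g.1 x
      invFun h := ⟨fun x => if hx : x = a then b else h ⟨x, hx⟩, by simp⟩
      left_inv g := by ext x; by_cases hx : x = a <;> simp [hx, g.2]
      right_inv h := by ext x; simp [x.2] }
  rw [Nat.card_congr restrict, Nat.card_fun, Nat.card_eq_fintype_card (α := {x // x ≠ a}),
    Fintype.card_subtype_compl, Fintype.card_subtype_eq, Nat.card_eq_fintype_card (α := α)]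

theorem Function.Bijective.existsUnique_comp_eq {α β γ : Type*} {g : α → β} (hg : Bijective g)
    (h : α → γ) : ∃! w : β → γ, ∀ a, w (g a) = h a := by
  refine ⟨h ∘ (Equiv.ofBijective g hg).symm, fun a => ?_, fun w hw => ?_⟩
  · simp
  · exact hg.2.injective_comp_right (funext fun a => by simp [hw])

section Events

variable {ι : Type*} {A X : ι → Type*}

def LocallyDistinguishable (p q : (∀ k, A k) × (∀ k, X k)) : Prop :=
  ∃ k, p.2 k = q.2 k ∧ p.1 k ≠ q.1 k

def ConsistentWith (f : ∀ k, X k → A k) (p : (∀ k, A k) × (∀ k, X k)) : Prop :=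
  ∀ k, f k (p.2 k) = p.1 k

theorem LocallyDistinguishable.fst_ne {p q : (∀ k, A k) × (∀ k, X k)}
    (h : LocallyDistinguishable p q) : p.1 ≠ q.1 := by
  obtain ⟨k, -, hk⟩ := h
  exact fun hpq => hk (congrFun hpq k)

theorem LocallyDistinguishable.not_consistentWith {p q : (∀ k, A k) × (∀ k, X k)}
    {f : ∀ k, X k → A k} (h : LocallyDistinguishable p q) (hp : ConsistentWith f p) :
    ¬ ConsistentWith f q := by
  obtain ⟨k, hx, ha⟩ := h
  intro hq
  exact ha (by rw [← hp k, ← hq k, hx])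

theorem locallyDistinguishable_of_prod_inner_eq_zero [Fintype ι] {𝕜 : Type*} [RCLike 𝕜]
    {E : ι → Type*} [∀ k, NormedAddCommGroup (E k)] [∀ k, InnerProductSpace 𝕜 (E k)]
    {v : ∀ k, X k → A k → E k} (hv : ∀ k x a, v k x a ≠ 0) {p q : (∀ k, A k) × (∀ k, X k)}
    (horth : ∏ k, inner 𝕜 (v k (p.2 k) (p.1 k)) (v k (q.2 k) (q.1 k)) = 0)
    (hunamb : ∀ k, v k (p.2 k) (p.1 k) ≠ v k (q.2 k) (q.1 k) →
      inner 𝕜 (v k (p.2 k) (p.1 k)) (v k (q.2 k) (q.1 k)) = 0 → p.2 k = q.2 k) :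
    LocallyDistinguishable p q := by
  obtain ⟨k, -, hk⟩ := Finset.prod_eq_zero_iff.1 horth
  have hne : v k (p.2 k) (p.1 k) ≠ v k (q.2 k) (q.1 k) := fun h =>
    hv _ _ _ (inner_self_eq_zero.1 (by rwa [← h] at hk))
  have hx := hunamb k hne hk
  exact ⟨k, hx, fun ha => hne (by rw [hx, ha])⟩

theorem card_consistentWith [Fintype ι] [∀ k, Finite (X k)] (p : (∀ k, A k) × (∀ k, X k)) :
    Nat.card {f : ∀ k, X k → A k // ConsistentWith f p} =
      ∏ k, Nat.card (A k) ^ (Nat.card (X k) - 1) := by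
  change Nat.card {f : ∀ k, X k → A k // ∀ k, f k (p.2 k) = p.1 k} = _
  rw [Nat.card_congr (Equiv.subtypePiEquivPi (p := fun k (g : X k → A k) => g (p.2 k) = p.1 k)),
    Nat.card_pi]
  exact Finset.prod_congr rfl fun k _ => Nat.card_subtype_apply_eq _ _

variable {J : Type*} {e : J → (∀ k, A k) × (∀ k, X k)}

theorem bijective_fst_of_pairwise_locallyDistinguishable [Fintype ι] [∀ k, Finite (A k)]
    (hdist : Pairwise fun i j => LocallyDistinguishable (e i) (e j))
    (hcard : Nat.card J = ∏ k, Nat.card (A k)) : Bijective fun j => (e j).1 := by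
  have hinj : Injective fun j => (e j).1 := fun i j h =>
    by_contra fun hij => (hdist hij).fst_ne h
  exact hinj.bijective_of_nat_card_le (by rw [Nat.card_pi, hcard])

theorem existsUnique_consistentWith [Fintype ι] [Fintype J] [∀ k, Finite (A k)]
    [∀ k, Finite (X k)] [∀ k, Nonempty (X k)]
    (hdist : Pairwise fun i j => LocallyDistinguishable (e i) (e j))
    (hcard : Nat.card J = ∏ k, Nat.card (A k)) (f : ∀ k, X k → A k) :
    ∃! j, ConsistentWith f (e j) := by
  let forget : (Σ j, {g : ∀ k, X k → A k // ConsistentWith g (e j)}) → ∀ k, X k → A k :=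
    fun s => s.2.1
  have hinj : Injective forget := by
    rintro ⟨i, g, hi⟩ ⟨j, g', hj⟩ (rfl : g = g')
    obtain rfl : i = j := by_contra fun hij => (hdist hij).not_consistentWith hi hj
    rfl
  have hcard_le : Nat.card (∀ k, X k → A k) ≤
      Nat.card (Σ j, {g : ∀ k, X k → A k // ConsistentWith g (e j)}) := by
    have hX (k : ι) : Nat.card (X k) ≠ 0 := Nat.card_pos.ne'
    simp only [Nat.card_sigma, card_consistentWith, Finset.sum_const, Finset.card_univ,
      ← Nat.card_eq_fintype_card, hcard, smul_eq_mul, ← Finset.prod_mul_distrib, Nat.card_pi,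
      Nat.card_fun, mul_comm (Nat.card (A _)), pow_sub_one_mul (hX _), le_refl]
  obtain ⟨⟨j, g, hj⟩, rfl⟩ := (hinj.bijective_of_nat_card_le hcard_le).2 f
  exact ⟨j, hj, fun i hi => by_contra fun hij => (hdist hij).not_consistentWith hi hj⟩

end Events

theorem isProcessFunction_of_existsUnique_consistentWith {ι J : Type} {A X : ι → Type}
    {e : J → (∀ k, A k) × (∀ k, X k)} {w : (∀ k, A k) → ∀ k, X k}
    (hsurj : Surjective fun j => (e j).1) (hw : ∀ j, w (e j).1 = (e j).2)
    (hcons : ∀ f, ∃! j, ConsistentWith f (e j)) : IsProcessFunction w := by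
  intro f
  obtain ⟨j, hj, huniq⟩ := hcons f
  refine ⟨(e j).2, ?_, fun y hy => ?_⟩
  · change (w fun k => f k ((e j).2 k)) = (e j).2
    rw [show (fun k => f k ((e j).2 k)) = (e j).1 from funext hj, hw]
  · obtain ⟨i, hi⟩ : ∃ i, (e i).1 = fun k => f k (y k) := hsurj _
    have hy' : (e i).2 = y := by rw [← hw, hi]; exact hy
    rw [← hy', huniq i fun k => by rw [hy']; exact (congrFun hi k).symm]

theorem unambiguous_basis_determines_processFunction_general
    -- `n` parties with local dimensions `d k`
    {n : ℕ} (d : Fin n → ℕ)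
    -- outcome sets `A k` with `|A k| = d k`, finite nonempty setting sets `X k`
    (A : Fin n → Type) [∀ k, Fintype (A k)]
    (hA : ∀ k, Fintype.card (A k) = d k)
    (X : Fin n → Type) [∀ k, Fintype (X k)] [∀ k, Nonempty (X k)]
    -- local vectors `|(a_k|x_k)⟩`, an orthonormal basis for each setting
    (v : ∀ k : Fin n, X k → A k → EuclideanSpace ℂ (Fin (d k)))
    (hv : ∀ (k : Fin n) (x : X k), Orthonormal ℂ (v k x))
    -- `N = ∏_k d_k` pairwise distinct events with pairwise orthogonal
    -- product vectors (a complete product basis)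
    {N : ℕ} (hN : N = ∏ k, d k)
    (e : Fin N → (∀ k, A k) × (∀ k, X k))
    (horth : ∀ j j' : Fin N, j ≠ j' →
      (∏ k : Fin n,
        (inner ℂ (v k ((e j).2 k) ((e j).1 k))
          (v k ((e j').2 k) ((e j').1 k)) : ℂ)) = 0)
    -- unambiguity: for labels occurring among the events, two distinct local
    -- vectors are orthogonal iff they belong to the same setting
    (hunamb : ∀ (k : Fin n) (a a' : A k) (x x' : X k),
      (∃ j, (e j).1 k = a ∧ (e j).2 k = x) →
      (∃ j, (e j).1 k = a' ∧ (e j).2 k = x') →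
      v k x a ≠ v k x' a' →
      ((inner ℂ (v k x a) (v k x' a') : ℂ) = 0 ↔ x = x'))
    :
    (∀ a : ∀ k, A k, ∃! j : Fin N, (e j).1 = a) ∧
    (∃! w : (∀ k, A k) → ∀ k, X k, ∀ j : Fin N, w ((e j).1) = (e j).2) ∧
    (∀ w : (∀ k, A k) → ∀ k, X k,
      (∀ j : Fin N, w ((e j).1) = (e j).2) → IsProcessFunction w) := by
  have hdist : Pairwise fun j j' => LocallyDistinguishable (e j) (e j') := fun j j' hne =>
    locallyDistinguishable_of_prod_inner_eq_zero (fun k x => (hv k x).ne_zero) (horth j j' hne)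
      fun k hv_ne h0 => (hunamb k _ _ _ _ ⟨j, rfl, rfl⟩ ⟨j', rfl, rfl⟩ hv_ne).1 h0
  have hcard : Nat.card (Fin N) = ∏ k, Nat.card (A k) := by
    simp [hN, hA]
  have hbij := bijective_fst_of_pairwise_locallyDistinguishable hdist hcard
  exact ⟨hbij.existsUnique, hbij.existsUnique_comp_eq _, fun w hw =>
    isProcessFunction_of_existsUnique_consistentWith hbij.2 hw
      (existsUnique_consistentWith hdist hcard)⟩

/-- **Theorem 3: any unambiguous complete joint `n`-partite product basis
determines a unique `n`-partite process function**: (a) every outcome string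
is the outcome string of exactly one event, so there is a unique function `w`
with `w(aʲ) = xʲ` for every event; and (b) this induced function is an
`n`-partite process function. -/
theorem unambiguous_basis_determines_processFunction
    -- `n` parties with local dimensions `d k`
    {n : ℕ} (hn : 1 ≤ n) (d : Fin n → ℕ) (hd : ∀ k, 1 ≤ d k)
    -- outcome sets `A k` with `|A k| = d k`, finite nonempty setting sets `X k`
    (A : Fin n → Type) [∀ k, Fintype (A k)] [∀ k, DecidableEq (A k)]
    (hA : ∀ k, Fintype.card (A k) = d k)
    (X : Fin n → Type) [∀ k, Fintype (X k)] [∀ k, Nonempty (X k)]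
    [∀ k, DecidableEq (X k)]
    -- local vectors `|(a_k|x_k)⟩`, an orthonormal basis for each setting
    (v : ∀ k : Fin n, X k → A k → EuclideanSpace ℂ (Fin (d k)))
    (hv : ∀ (k : Fin n) (x : X k), Orthonormal ℂ (v k x))
    -- `N = ∏_k d_k` pairwise distinct events with pairwise orthogonal
    -- product vectors (a complete product basis)
    {N : ℕ} (hN : N = ∏ k, d k)
    (e : Fin N → (∀ k, A k) × (∀ k, X k))
    (he : Function.Injective e)
    (horth : ∀ j j' : Fin N, j ≠ j' →
      (∏ k : Fin n,
        (inner ℂ (v k ((e j).2 k) ((e j).1 k))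
          (v k ((e j').2 k) ((e j').1 k)) : ℂ)) = 0)
    -- unambiguity: for labels occurring among the events, two distinct local
    -- vectors are orthogonal iff they belong to the same setting
    (hunamb : ∀ (k : Fin n) (a a' : A k) (x x' : X k),
      (∃ j, (e j).1 k = a ∧ (e j).2 k = x) →
      (∃ j, (e j).1 k = a' ∧ (e j).2 k = x') →
      v k x a ≠ v k x' a' →
      ((inner ℂ (v k x a) (v k x' a') : ℂ) = 0 ↔ x = x'))
    :
    (∀ a : ∀ k, A k, ∃! j : Fin N, (e j).1 = a) ∧
    (∃! w : (∀ k, A k) → ∀ k, X k, ∀ j : Fin N, w ((e j).1) = (e j).2) ∧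
    (∀ w : (∀ k, A k) → ∀ k, X k,
      (∀ j : Fin N, w ((e j).1) = (e j).2) → IsProcessFunction w) :=
  unambiguous_basis_determines_processFunction_general d A hA X v hv hN e horth hunamb
end

section
/- Let n = 2 and let an unambiguous complete product basis on ℂ^{d_1} ⊗ ℂ^{d_2} be given. Then at least one party's setting label is the same in all events: there exist k ∈ {1,2} and x_k^0 ∈ X_k such that x_k^j = x_k^0 for every event j (one-way no-signaling: the corresponding component of the induced function is constant). -/
/-!
If two events carry different settings for the first party, unambiguity makes their first-party
overlap nonzero, so orthogonality of the product vectors forces the second-party overlap to vanish,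
and unambiguity again says that the second party's settings agree. A pair of labellings in which
any two events that differ in the first label share the second one has a constant component.
-/

theorem exists_const_or_exists_const_of_ne_imp_eq {ι α β : Type*} [Nonempty α]
    {f : ι → α} {g : ι → β} (h : ∀ i j, f i ≠ f j → g i = g j) :
    (∃ a, ∀ i, f i = a) ∨ ∃ b, ∀ i, g i = b := by
  by_cases hf : ∃ a, ∀ i, f i = a
  · exact Or.inl hf
  right
  rcases isEmpty_or_nonempty ι with hι | ⟨⟨i₀⟩⟩
  · exact absurd ⟨Classical.arbitrary α, hι.elim⟩ hf
  obtain ⟨i₁, hi₁⟩ : ∃ i₁, f i₁ ≠ f i₀ := by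
    simp only [not_exists, not_forall] at hf
    exact hf (f i₀)
  refine ⟨g i₀, fun i => ?_⟩
  by_cases hi : f i = f i₀
  · rw [h i i₁ (hi ▸ hi₁.symm), ← h i₀ i₁ hi₁.symm]
  · exact h i i₀ hi

theorem of_inner_eq_zero_of_ne_imp_iff {𝕜 E : Type*} [RCLike 𝕜] [NormedAddCommGroup E]
    [InnerProductSpace 𝕜 E] {u w : E} {p : Prop} (hu : u ≠ 0)
    (h : u ≠ w → (inner 𝕜 u w = 0 ↔ p)) (huw : inner 𝕜 u w = 0) : p := by
  by_cases hEq : u = w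
  · subst hEq
    exact absurd (inner_self_eq_zero.mp huw) hu
  · exact (h hEq).mp huw

theorem bipartite_unambiguous_basis_one_way_no_signaling_general
    -- two parties with local dimensions `d k`
    (d : Fin 2 → ℕ)
    -- outcome sets `A k` with `|A k| = d k`, finite nonempty setting sets `X k`
    (A : Fin 2 → Type)
    (X : Fin 2 → Type) [∀ k, Nonempty (X k)]
    -- local vectors `|(a_k|x_k)⟩`, an orthonormal basis for each setting
    (v : ∀ k : Fin 2, X k → A k → EuclideanSpace ℂ (Fin (d k)))
    (hv : ∀ (k : Fin 2) (x : X k), Orthonormal ℂ (v k x))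
    -- `N = ∏_k d_k` pairwise distinct events with pairwise orthogonal
    -- product vectors (a complete product basis)
    {N : ℕ}
    (e : Fin N → (∀ k, A k) × (∀ k, X k))
    (horth : ∀ j j' : Fin N, j ≠ j' →
      (∏ k : Fin 2,
        (inner ℂ (v k ((e j).2 k) ((e j).1 k))
          (v k ((e j').2 k) ((e j').1 k)) : ℂ)) = 0)
    -- unambiguity
    (hunamb : ∀ (k : Fin 2) (a a' : A k) (x x' : X k),
      (∃ j, (e j).1 k = a ∧ (e j).2 k = x) →
      (∃ j, (e j).1 k = a' ∧ (e j).2 k = x') →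
      v k x a ≠ v k x' a' →
      ((inner ℂ (v k x a) (v k x' a') : ℂ) = 0 ↔ x = x')) :
    ∃ (k : Fin 2) (x0 : X k), ∀ j : Fin N, (e j).2 k = x0 := by
  have hsettings : ∀ k j j', inner ℂ (v k ((e j).2 k) ((e j).1 k))
      (v k ((e j').2 k) ((e j').1 k)) = 0 → (e j).2 k = (e j').2 k := fun k j j' =>
    of_inner_eq_zero_of_ne_imp_iff ((hv k _).ne_zero _)
      (hunamb k _ _ _ _ ⟨j, rfl, rfl⟩ ⟨j', rfl, rfl⟩)
  have hsignal : ∀ j j', (e j).2 0 ≠ (e j').2 0 → (e j).2 1 = (e j').2 1 := by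
    intro j j' hx
    have hprod := horth j j' fun hjj => hx (hjj ▸ rfl)
    rw [Fin.prod_univ_two] at hprod
    exact hsettings 1 j j' <| (mul_eq_zero.mp hprod).resolve_left fun h => hx (hsettings 0 j j' h)
  rcases exists_const_or_exists_const_of_ne_imp_eq hsignal with ⟨x0, hx0⟩ | ⟨x1, hx1⟩
  exacts [⟨0, x0, hx0⟩, ⟨1, x1, hx1⟩]

/-- **No bipartite unambiguous QNLWE basis**: for `n = 2`, in any unambiguous
complete product basis at least one party's setting label is the same in all
events (one-way no-signaling: the corresponding component of the induced
function is constant). -/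
theorem bipartite_unambiguous_basis_one_way_no_signaling
    -- two parties with local dimensions `d k`
    (d : Fin 2 → ℕ) (hd : ∀ k, 1 ≤ d k)
    -- outcome sets `A k` with `|A k| = d k`, finite nonempty setting sets `X k`
    (A : Fin 2 → Type) [∀ k, Fintype (A k)] [∀ k, DecidableEq (A k)]
    (hA : ∀ k, Fintype.card (A k) = d k)
    (X : Fin 2 → Type) [∀ k, Fintype (X k)] [∀ k, Nonempty (X k)]
    [∀ k, DecidableEq (X k)]
    -- local vectors `|(a_k|x_k)⟩`, an orthonormal basis for each setting
    (v : ∀ k : Fin 2, X k → A k → EuclideanSpace ℂ (Fin (d k)))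
    (hv : ∀ (k : Fin 2) (x : X k), Orthonormal ℂ (v k x))
    -- `N = ∏_k d_k` pairwise distinct events with pairwise orthogonal
    -- product vectors (a complete product basis)
    {N : ℕ} (hN : N = ∏ k, d k)
    (e : Fin N → (∀ k, A k) × (∀ k, X k))
    (he : Function.Injective e)
    (horth : ∀ j j' : Fin N, j ≠ j' →
      (∏ k : Fin 2,
        (inner ℂ (v k ((e j).2 k) ((e j).1 k))
          (v k ((e j').2 k) ((e j').1 k)) : ℂ)) = 0)
    -- unambiguity
    (hunamb : ∀ (k : Fin 2) (a a' : A k) (x x' : X k),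
      (∃ j, (e j).1 k = a ∧ (e j).2 k = x) →
      (∃ j, (e j).1 k = a' ∧ (e j).2 k = x') →
      v k x a ≠ v k x' a' →
      ((inner ℂ (v k x a) (v k x' a') : ℂ) = 0 ↔ x = x')) :
    ∃ (k : Fin 2) (x0 : X k), ∀ j : Fin N, (e j).2 k = x0 :=
  bipartite_unambiguous_basis_one_way_no_signaling_general d A X v hv e horth hunamb
end

section
/- Let an unambiguous complete product basis be given and let w : ∏_k A_k → ∏_k X_k be the unique induced function (w(a^j) = x^j for every event j). Then w is non-self-signaling: for every party k, every a_{∖k} ∈ ∏_{j≠k} A_j, and all a_k, a'_k ∈ A_k, the X_k-component of w satisfies w_k(a_k, a_{∖k}) = w_k(a'_k, a_{∖k}). -/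
/-!
Since `w` is the graph of the events and there are `∏ₖ dₖ` of them, every outcome string is the
outcome string of exactly one event. Two distinct events have orthogonal product vectors, so some
local factor vanishes; by unambiguity that party uses the same setting in both events, and then
orthonormality of the setting's basis forces different outcomes there. If the two outcome strings
differ only at party `k`, that party must be `k`, so both events use the same setting at `k`.
-/

theorem surjective_fst_comp_of_injective_of_card_eq {J α β : Type*} [Fintype J] [Fintype α]
    {e : J → α × β} (he : Function.Injective e) {w : α → β} (hw : ∀ j, w (e j).1 = (e j).2)
    (hcard : Fintype.card J = Fintype.card α) : Function.Surjective (Prod.fst ∘ e) := by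
  have hinj : Function.Injective (Prod.fst ∘ e) := fun j j' h => by
    have h : (e j).1 = (e j').1 := h
    exact he (Prod.ext h (by rw [← hw j, ← hw j', h]))
  exact ((Fintype.bijective_iff_injective_and_card _).mpr ⟨hinj, hcard⟩).2

theorem setting_eq_and_outcome_ne_of_inner_eq_zero {𝕜 E X A : Type*} [RCLike 𝕜]
    [NormedAddCommGroup E] [InnerProductSpace 𝕜 E] {v : X → A → E}
    (hv : ∀ x, Orthonormal 𝕜 (v x)) {x x' : X} {a a' : A}
    (hunamb : v x a ≠ v x' a' → (inner 𝕜 (v x a) (v x' a') = 0 ↔ x = x'))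
    (h : inner 𝕜 (v x a) (v x' a') = 0) : x = x' ∧ a ≠ a' := by
  have hne : v x a ≠ v x' a' := fun heq =>
    inner_self_ne_zero.mpr ((hv x).ne_zero a) (by rwa [← heq] at h)
  have hx : x = x' := (hunamb hne).mp h
  exact ⟨hx, fun ha => hne (by rw [hx, ha])⟩

theorem exists_setting_eq_and_outcome_ne_of_prod_inner_eq_zero {𝕜 ι : Type*} [RCLike 𝕜]
    [Fintype ι] {E X A : ι → Type*} [∀ k, NormedAddCommGroup (E k)]
    [∀ k, InnerProductSpace 𝕜 (E k)] {v : ∀ k, X k → A k → E k}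
    (hv : ∀ k x, Orthonormal 𝕜 (v k x)) {a a' : ∀ k, A k} {x x' : ∀ k, X k}
    (hunamb : ∀ k, v k (x k) (a k) ≠ v k (x' k) (a' k) →
      (inner 𝕜 (v k (x k) (a k)) (v k (x' k) (a' k)) = 0 ↔ x k = x' k))
    (h : ∏ k, inner 𝕜 (v k (x k) (a k)) (v k (x' k) (a' k)) = 0) :
    ∃ k, x k = x' k ∧ a k ≠ a' k := by
  obtain ⟨k, -, hk⟩ := Finset.prod_eq_zero_iff.mp h
  exact ⟨k, setting_eq_and_outcome_ne_of_inner_eq_zero (hv k) (hunamb k) hk⟩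

theorem unambiguous_basis_induced_function_nonSelfSignaling_general
    -- `n` parties with local dimensions `d k`
    {n : ℕ} (d : Fin n → ℕ)
    -- outcome sets `A k` with `|A k| = d k`, finite nonempty setting sets `X k`
    (A : Fin n → Type) [∀ k, Fintype (A k)]
    (hA : ∀ k, Fintype.card (A k) = d k)
    (X : Fin n → Type)
    -- local vectors `|(a_k|x_k)⟩`, an orthonormal basis for each setting
    (v : ∀ k : Fin n, X k → A k → EuclideanSpace ℂ (Fin (d k)))
    (hv : ∀ (k : Fin n) (x : X k), Orthonormal ℂ (v k x))
    -- `N = ∏_k d_k` pairwise distinct events with pairwise orthogonal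
    -- product vectors (a complete product basis)
    {N : ℕ} (hN : N = ∏ k, d k)
    (e : Fin N → (∀ k, A k) × (∀ k, X k))
    (he : Function.Injective e)
    (horth : ∀ j j' : Fin N, j ≠ j' →
      (∏ k : Fin n,
        (inner ℂ (v k ((e j).2 k) ((e j).1 k))
          (v k ((e j').2 k) ((e j').1 k)) : ℂ)) = 0)
    -- unambiguity: for labels occurring among the events, two distinct local
    -- vectors are orthogonal iff they belong to the same setting
    (hunamb : ∀ (k : Fin n) (a a' : A k) (x x' : X k),
      (∃ j, (e j).1 k = a ∧ (e j).2 k = x) →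
      (∃ j, (e j).1 k = a' ∧ (e j).2 k = x') →
      v k x a ≠ v k x' a' →
      ((inner ℂ (v k x a) (v k x' a') : ℂ) = 0 ↔ x = x'))
    -- `w` is the induced function of the basis
    (w : (∀ k, A k) → ∀ k, X k)
    (hw : ∀ j : Fin N, w ((e j).1) = (e j).2) :
    ∀ (k : Fin n) (a a' : ∀ j, A j),
      (∀ j : Fin n, j ≠ k → a j = a' j) → w a k = w a' k := by
  intro k a a' hagree
  have hsurj := surjective_fst_comp_of_injective_of_card_eq he hw
    (by simp [Fintype.card_pi, hA, hN])
  obtain ⟨j, rfl⟩ := hsurj a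
  obtain ⟨j', rfl⟩ := hsurj a'
  rcases eq_or_ne j j' with rfl | hne
  · rfl
  obtain ⟨m, hx, ha⟩ := exists_setting_eq_and_outcome_ne_of_prod_inner_eq_zero hv
    (fun m => hunamb m _ _ _ _ ⟨j, rfl, rfl⟩ ⟨j', rfl, rfl⟩) (horth j j' hne)
  obtain rfl : m = k := by_contra fun hmk => ha (hagree m hmk)
  simpa only [Function.comp_apply, hw] using hx

/-- **Non-self-signaling of the induced function**: the unique function `w`
induced by an unambiguous complete product basis (i.e. satisfying
`w(aʲ) = xʲ` for every event `j`) is non-self-signaling: its `k`-th component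
does not depend on the `k`-th party's outcome. -/
theorem unambiguous_basis_induced_function_nonSelfSignaling
    -- `n` parties with local dimensions `d k`
    {n : ℕ} (hn : 1 ≤ n) (d : Fin n → ℕ) (hd : ∀ k, 1 ≤ d k)
    -- outcome sets `A k` with `|A k| = d k`, finite nonempty setting sets `X k`
    (A : Fin n → Type) [∀ k, Fintype (A k)] [∀ k, DecidableEq (A k)]
    (hA : ∀ k, Fintype.card (A k) = d k)
    (X : Fin n → Type) [∀ k, Fintype (X k)] [∀ k, Nonempty (X k)]
    [∀ k, DecidableEq (X k)]
    -- local vectors `|(a_k|x_k)⟩`, an orthonormal basis for each setting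
    (v : ∀ k : Fin n, X k → A k → EuclideanSpace ℂ (Fin (d k)))
    (hv : ∀ (k : Fin n) (x : X k), Orthonormal ℂ (v k x))
    -- `N = ∏_k d_k` pairwise distinct events with pairwise orthogonal
    -- product vectors (a complete product basis)
    {N : ℕ} (hN : N = ∏ k, d k)
    (e : Fin N → (∀ k, A k) × (∀ k, X k))
    (he : Function.Injective e)
    (horth : ∀ j j' : Fin N, j ≠ j' →
      (∏ k : Fin n,
        (inner ℂ (v k ((e j).2 k) ((e j).1 k))
          (v k ((e j').2 k) ((e j').1 k)) : ℂ)) = 0)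
    -- unambiguity: for labels occurring among the events, two distinct local
    -- vectors are orthogonal iff they belong to the same setting
    (hunamb : ∀ (k : Fin n) (a a' : A k) (x x' : X k),
      (∃ j, (e j).1 k = a ∧ (e j).2 k = x) →
      (∃ j, (e j).1 k = a' ∧ (e j).2 k = x') →
      v k x a ≠ v k x' a' →
      ((inner ℂ (v k x a) (v k x' a') : ℂ) = 0 ↔ x = x'))
    -- `w` is the induced function of the basis
    (w : (∀ k, A k) → ∀ k, X k)
    (hw : ∀ j : Fin N, w ((e j).1) = (e j).2) :
    ∀ (k : Fin n) (a a' : ∀ j, A j),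
      (∀ j : Fin n, j ≠ k → a j = a' j) → w a k = w a' k :=
  unambiguous_basis_induced_function_nonSelfSignaling_general d A hA X v hv hN e he horth hunamb w
    hw
end

section
/- Let an unambiguous complete product basis be given. Then there exists a unique function w : ∏_k A_k → ∏_k X_k such that the set of events of the basis is exactly {(a, w(a)) : a ∈ ∏_k A_k}; in particular, every outcome string a ∈ ∏_k A_k is the outcome string a^j of exactly one event j, and w(a^j) = x^j for every j. -/
/-!
Two distinct events with the same outcome string have orthogonal product vectors, so in some
party `k` the local vectors `(a_k|x_k)` and `(a_k|x'_k)` are orthogonal. They cannot coincide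
(they are unit vectors), so unambiguity forces `x_k = x'_k`, and then they do coincide after all.
Hence the outcome string determines the event; as there are `N = ∏_k d_k = |∏_k A_k|` events,
every outcome string occurs exactly once, and `w a` is the setting of the event with outcome `a`.
-/

open scoped InnerProductSpace

section Unambiguous

variable {𝕜 : Type*} [RCLike 𝕜]

theorem inner_ne_zero_of_unambiguous {E X ι : Type*} [NormedAddCommGroup E]
    [InnerProductSpace 𝕜 E] {v : X → ι → E} (hv : ∀ x, Orthonormal 𝕜 (v x))
    {x x' : X} {a : ι} (h : v x a ≠ v x' a → ⟪v x a, v x' a⟫_𝕜 = 0 → x = x') :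
    ⟪v x a, v x' a⟫_𝕜 ≠ 0 := by
  intro h0
  have hne : v x a ≠ v x' a := by
    intro heq
    rw [heq, inner_self_eq_zero] at h0
    exact (hv x').ne_zero a h0
  exact hne (by rw [h hne h0])

theorem outcomes_injective_of_unambiguous {ι J : Type*} [Fintype ι] {A X E : ι → Type*}
    [∀ k, NormedAddCommGroup (E k)] [∀ k, InnerProductSpace 𝕜 (E k)]
    (v : ∀ k, X k → A k → E k) (hv : ∀ k x, Orthonormal 𝕜 (v k x))
    (e : J → (∀ k, A k) × (∀ k, X k))
    (horth : ∀ j j', j ≠ j' →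
      ∏ k, ⟪v k ((e j).2 k) ((e j).1 k), v k ((e j').2 k) ((e j').1 k)⟫_𝕜 = 0)
    (hunamb : ∀ k a a' x x',
      (∃ j, (e j).1 k = a ∧ (e j).2 k = x) →
      (∃ j, (e j).1 k = a' ∧ (e j).2 k = x') →
      v k x a ≠ v k x' a' → ⟪v k x a, v k x' a'⟫_𝕜 = 0 → x = x') :
    Function.Injective fun j => (e j).1 := by
  intro j j' h
  by_contra hne
  obtain ⟨k, -, hk⟩ := Finset.prod_eq_zero_iff.mp (horth j j' hne)
  have ha : (e j).1 k = (e j').1 k := congrFun h k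
  rw [← ha] at hk
  exact inner_ne_zero_of_unambiguous (hv k)
    (hunamb k _ _ _ _ ⟨j, rfl, rfl⟩ ⟨j', ha.symm, rfl⟩) hk

end Unambiguous

theorem existsUnique_range_eq_graph_of_bijective_fst {J α β : Type*} (e : J → α × β)
    (he : Function.Bijective fun j => (e j).1) :
    ∃! w : α → β, Set.range e = Set.range (fun a => (a, w a)) ∧ ∀ j, w (e j).1 = (e j).2 := by
  let f := Equiv.ofBijective _ he
  let w : α → β := fun a => (e (f.symm a)).2
  have hw : ∀ j, w (e j).1 = (e j).2 := fun j => by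
    simp only [w]
    rw [show (e j).1 = f j from rfl, f.symm_apply_apply]
  refine ⟨w, ⟨?_, hw⟩, ?_⟩
  · calc Set.range e = Set.range ((fun a => (a, w a)) ∘ fun j => (e j).1) :=
          congrArg Set.range (funext fun j => Prod.ext rfl (hw j).symm)
      _ = Set.range fun a => (a, w a) := he.2.range_comp _
  · rintro w' ⟨-, hw'⟩
    funext a
    obtain ⟨j, rfl⟩ := he.2 a
    rw [hw', hw]

theorem unambiguous_basis_induced_function_general
    -- `n` parties with local dimensions `d k`
    {n : ℕ} (d : Fin n → ℕ)
    -- outcome sets `A k` with `|A k| = d k`, finite nonempty setting sets `X k`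
    (A : Fin n → Type) [∀ k, Fintype (A k)]
    (hA : ∀ k, Fintype.card (A k) = d k)
    (X : Fin n → Type)
    -- local vectors `|(a_k|x_k)⟩`, an orthonormal basis for each setting
    (v : ∀ k : Fin n, X k → A k → EuclideanSpace ℂ (Fin (d k)))
    (hv : ∀ (k : Fin n) (x : X k), Orthonormal ℂ (v k x))
    -- `N = ∏_k d_k` pairwise distinct events with pairwise orthogonal
    -- product vectors (a complete product basis)
    {N : ℕ} (hN : N = ∏ k, d k)
    (e : Fin N → (∀ k, A k) × (∀ k, X k))
    (horth : ∀ j j' : Fin N, j ≠ j' →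
      (∏ k : Fin n,
        (inner ℂ (v k ((e j).2 k) ((e j).1 k))
          (v k ((e j').2 k) ((e j').1 k)) : ℂ)) = 0)
    -- unambiguity: for labels occurring among the events, two distinct local
    -- vectors are orthogonal iff they belong to the same setting
    (hunamb : ∀ (k : Fin n) (a a' : A k) (x x' : X k),
      (∃ j, (e j).1 k = a ∧ (e j).2 k = x) →
      (∃ j, (e j).1 k = a' ∧ (e j).2 k = x') →
      v k x a ≠ v k x' a' →
      ((inner ℂ (v k x a) (v k x' a') : ℂ) = 0 ↔ x = x'))
    :
    (∀ a : ∀ k, A k, ∃! j : Fin N, (e j).1 = a) ∧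
    (∃! w : (∀ k, A k) → ∀ k, X k,
      Set.range e = Set.range (fun a : ∀ k, A k => (a, w a)) ∧
        ∀ j : Fin N, w ((e j).1) = (e j).2) := by
  have hinj := outcomes_injective_of_unambiguous v hv e horth
    fun k a a' x x' h h' hne => (hunamb k a a' x x' h h' hne).mp
  have hbij : Function.Bijective fun j => (e j).1 :=
    (Fintype.bijective_iff_injective_and_card _).2 ⟨hinj, by simp [Fintype.card_pi, hA, hN]⟩
  exact ⟨hbij.existsUnique, existsUnique_range_eq_graph_of_bijective_fst e hbij⟩

/-- **The unique induced function of an unambiguous complete product basis**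
(Lemma B.3): every outcome string is the outcome string of exactly one event,
and there is a unique function `w : ∏_k A_k → ∏_k X_k` whose graph
`{(a, w(a))}` is exactly the set of events; in particular `w(aʲ) = xʲ` for
every event `j`. -/
theorem unambiguous_basis_induced_function
    -- `n` parties with local dimensions `d k`
    {n : ℕ} (hn : 1 ≤ n) (d : Fin n → ℕ) (hd : ∀ k, 1 ≤ d k)
    -- outcome sets `A k` with `|A k| = d k`, finite nonempty setting sets `X k`
    (A : Fin n → Type) [∀ k, Fintype (A k)] [∀ k, DecidableEq (A k)]
    (hA : ∀ k, Fintype.card (A k) = d k)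
    (X : Fin n → Type) [∀ k, Fintype (X k)] [∀ k, Nonempty (X k)]
    [∀ k, DecidableEq (X k)]
    -- local vectors `|(a_k|x_k)⟩`, an orthonormal basis for each setting
    (v : ∀ k : Fin n, X k → A k → EuclideanSpace ℂ (Fin (d k)))
    (hv : ∀ (k : Fin n) (x : X k), Orthonormal ℂ (v k x))
    -- `N = ∏_k d_k` pairwise distinct events with pairwise orthogonal
    -- product vectors (a complete product basis)
    {N : ℕ} (hN : N = ∏ k, d k)
    (e : Fin N → (∀ k, A k) × (∀ k, X k))
    (he : Function.Injective e)
    (horth : ∀ j j' : Fin N, j ≠ j' →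
      (∏ k : Fin n,
        (inner ℂ (v k ((e j).2 k) ((e j).1 k))
          (v k ((e j').2 k) ((e j').1 k)) : ℂ)) = 0)
    -- unambiguity: for labels occurring among the events, two distinct local
    -- vectors are orthogonal iff they belong to the same setting
    (hunamb : ∀ (k : Fin n) (a a' : A k) (x x' : X k),
      (∃ j, (e j).1 k = a ∧ (e j).2 k = x) →
      (∃ j, (e j).1 k = a' ∧ (e j).2 k = x') →
      v k x a ≠ v k x' a' →
      ((inner ℂ (v k x a) (v k x' a') : ℂ) = 0 ↔ x = x'))
    :
    (∀ a : ∀ k, A k, ∃! j : Fin N, (e j).1 = a) ∧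
    (∃! w : (∀ k, A k) → ∀ k, X k,
      Set.range e = Set.range (fun a : ∀ k, A k => (a, w a)) ∧
        ∀ j : Fin N, w ((e j).1) = (e j).2) :=
  unambiguous_basis_induced_function_general d A hA X v hv hN e horth hunamb
end

section
/- Let w : ∏_k A_k → ∏_k X_k be an n-partite process function with components w_k : ∏_{j≠k} A_j → X_k, where |A_k| = d_k, and for each party k and each setting x_k ∈ X_k let (v_k^{x_k}(a_k))_{a_k ∈ A_k} be an orthonormal basis of ℂ^{d_k} := EuclideanSpace ℂ (Fin d_k). Then the ∏_k d_k product vectors ψ^a (a ∈ ∏_k A_k), whose k-th local factor is v_k^{w_k(a_{∖k})}(a_k), are pairwise orthogonal: for all a ≠ a' in ∏_k A_k, ∏_{k=1}^n ⟪v_k^{w_k(a_{∖k})}(a_k), v_k^{w_k(a'_{∖k})}(a'_k)⟫ = 0. (Consequently, being ∏_k d_k pairwise orthogonal unit product vectors, they form an orthonormal basis of ⊗_k ℂ^{d_k}: the LOPF measurement is an effective distributed projective measurement.) -/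
/-!
Suppose no factor `⟪v_k^{x_k}(a_k), v_k^{x'_k}(a'_k)⟫` of the product vanishes, where
`x = w a` and `x' = w a'`. By orthonormality, every party with `x_k = x'_k` has
`a_k = a'_k`. The local intervention `f_k` sending `x'_k` to `a'_k` and everything else to
`a_k` then has both `x` and `x'` as fixed points, so `x = x'` by uniqueness, whence `a = a'`.
-/

noncomputable section
open scoped BigOperators

theorem IsProcessFunction.eq_of_forall_eq_of_apply_eq {ι : Type} {A X : ι → Type}
    {w : (∀ k, A k) → ∀ k, X k} (hw : IsProcessFunction w) {a a' : ∀ k, A k}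
    (h : ∀ k, w a k = w a' k → a k = a' k) : a = a' := by
  classical
  let f : ∀ k, X k → A k := fun k x => if x = w a' k then a' k else a k
  have hfa : (fun k => f k (w a k)) = a := funext fun k => by
    by_cases hk : w a k = w a' k
    · simp only [f, if_pos hk, h k hk]
    · simp only [f, if_neg hk]
  have hfa' : (fun k => f k (w a' k)) = a' := funext fun k => by simp only [f, if_pos rfl]
  obtain ⟨x, -, huniq⟩ := hw f
  have hwa : w a = x := huniq _ (congrArg w hfa)
  have hwa' : w a' = x := huniq _ (congrArg w hfa')
  exact funext fun k => h k (by rw [hwa, hwa'])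

theorem Orthonormal.eq_of_inner_ne_zero {𝕜 E ι : Type*} [RCLike 𝕜] [SeminormedAddCommGroup E]
    [InnerProductSpace 𝕜 E] {v : ι → E} (hv : Orthonormal 𝕜 v) {i j : ι}
    (h : inner 𝕜 (v i) (v j) ≠ 0) : i = j := by
  by_contra hij
  exact h (hv.2 hij)

theorem processFunction_product_vectors_orthogonal_general
    {n : ℕ} (d : Fin n → ℕ)
    (A : Fin n → Type)
    (X : Fin n → Type)
    -- the components of the process function
    (w : ∀ k : Fin n, (∀ j : {j : Fin n // j ≠ k}, A j) → X k)
    (hw : IsProcessFunction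
      (fun (a : ∀ k, A k) (k : Fin n) => w k (fun j => a j)))
    -- local orthonormal bases for each party and setting
    (v : ∀ k : Fin n, X k → A k → EuclideanSpace ℂ (Fin (d k)))
    (hv : ∀ (k : Fin n) (x : X k), Orthonormal ℂ (v k x)) :
    ∀ a a' : ∀ k, A k, a ≠ a' →
      (∏ k : Fin n,
        (inner ℂ (v k (w k fun j => a j) (a k))
          (v k (w k fun j => a' j) (a' k)) : ℂ)) = 0 := by
  intro a a' hne
  by_contra hprod
  have hfactor := Finset.prod_ne_zero_iff.mp hprod
  refine hne (hw.eq_of_forall_eq_of_apply_eq fun k hk => ?_)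
  exact (hv k _).eq_of_inner_ne_zero (hk ▸ hfactor k (Finset.mem_univ k))

/-- **LOPF measurements are distributed projective measurements**: given an
`n`-partite process function with components `w_k : ∏_{j≠k} A_j → X_k`
(`|A_k| = d_k`) and, for each party and setting, an orthonormal basis
`(v_k^{x_k}(a_k))_{a_k}` of `ℂ^{d_k}`, the `∏_k d_k` product vectors `ψ^a`
whose `k`-th local factor is `v_k^{w_k(a_{∖k})}(a_k)` are pairwise
orthogonal. -/
theorem processFunction_product_vectors_orthogonal
    {n : ℕ} (hn : 1 ≤ n) (d : Fin n → ℕ)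
    (A : Fin n → Type) [∀ k, Fintype (A k)] [∀ k, Nonempty (A k)]
    (hA : ∀ k, Fintype.card (A k) = d k)
    (X : Fin n → Type) [∀ k, Fintype (X k)] [∀ k, Nonempty (X k)]
    -- the components of the process function
    (w : ∀ k : Fin n, (∀ j : {j : Fin n // j ≠ k}, A j) → X k)
    (hw : IsProcessFunction
      (fun (a : ∀ k, A k) (k : Fin n) => w k (fun j => a j)))
    -- local orthonormal bases for each party and setting
    (v : ∀ k : Fin n, X k → A k → EuclideanSpace ℂ (Fin (d k)))
    (hv : ∀ (k : Fin n) (x : X k), Orthonormal ℂ (v k x)) :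
    ∀ a a' : ∀ k, A k, a ≠ a' →
      (∏ k : Fin n,
        (inner ℂ (v k (w k fun j => a j) (a k))
          (v k (w k fun j => a' j) (a' k)) : ℂ)) = 0 :=
  processFunction_product_vectors_orthogonal_general d A X w hw v hv

end
end

section
/- Let w : ∏_k A_k → ∏_k X_k be an n-partite process function with components w_k : ∏_{j≠k} A_j → X_k, where A_k = Fin d_k, and for each party k and each setting x_k ∈ X_k let U_k^{x_k} be a unitary operator on ℂ^{d_k} := EuclideanSpace ℂ (Fin d_k) such that, writing (e_{a_k}) for the standard orthonormal basis, for all a_k, a'_k ∈ A_k and x_k, x'_k ∈ X_k with (a_k, x_k) ≠ (a'_k, x'_k): ⟪U_k^{x'_k} e_{a'_k}, U_k^{x_k} e_{a_k}⟫ = 0 if and only if (x'_k = x_k and a'_k ≠ a_k). Define local vectors |(a_k|x_k)⟩ := U_k^{x_k} e_{a_k} and the family of ∏_k d_k events (a | (w_k(a_{∖k}))_k) for a ∈ ∏_k A_k. Then this data is a complete unambiguous product basis: each setting family (|(a_k|x_k)⟩)_{a_k} is an orthonormal basis of ℂ^{d_k}, the events are pairwise distinct with pairwise orthogonal product vectors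 (for a ≠ a', ∏_k ⟪(a_k|w_k(a_{∖k})), (a'_k|w_k(a'_{∖k}))⟫ = 0), and the unambiguity condition holds. -/
/-!
Two distinct outcome tuples `a ≠ a'` must disagree at some party `k` whose setting they share,
`w_k(a) = w_k(a')`: otherwise the intervention sending `w_k(a')` to `a'_k` and every other setting
to `a_k` has both `w(a)` and `w(a')` as fixed points, so `w(a) = w(a')` and then `a = a'`.
At that party the two local vectors lie in one orthonormal basis, which kills the product.
-/

noncomputable section
open scoped BigOperators

open scoped InnerProductSpace

theorem IsProcessFunction.exists_apply_eq_and_ne_of_ne {ι : Type} {A X : ι → Type}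
    {w : (∀ k, A k) → ∀ k, X k} (hw : IsProcessFunction w) {a a' : ∀ k, A k} (hne : a ≠ a') :
    ∃ k, w a k = w a' k ∧ a k ≠ a' k := by
  classical
  by_contra! hsame
  let f : ∀ k, X k → A k := fun k y => if y = w a' k then a' k else a k
  obtain ⟨z, -, huniq⟩ := hw f
  have hfix : (w fun k => f k (w a k)) = w a := by
    congr 1
    funext k
    by_cases h : w a k = w a' k
    · simp only [f, if_pos h, hsame k h]
    · simp only [f, if_neg h]
  have hfix' : (w fun k => f k (w a' k)) = w a' := by
    simp only [f, if_true]
  have hw_eq : w a = w a' := (huniq _ hfix).trans (huniq _ hfix').symm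
  exact hne (funext fun k => hsame k (congrFun hw_eq k))

theorem inner_eq_zero_iff_of_ne_of_unambiguous {𝕜 E α X : Type*} [RCLike 𝕜]
    [NormedAddCommGroup E] [InnerProductSpace 𝕜 E] {v : X → α → E}
    (hv : ∀ a a' x x', (a, x) ≠ (a', x') → (⟪v x' a', v x a⟫_𝕜 = 0 ↔ x' = x ∧ a' ≠ a))
    {a a' : α} {x x' : X} (hne : v x a ≠ v x' a') :
    ⟪v x a, v x' a'⟫_𝕜 = 0 ↔ x = x' := by
  have hlabel : (a', x') ≠ (a, x) := fun h => hne (by simp_all)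
  rw [hv a' a x' x hlabel]
  exact ⟨And.left, fun hx => ⟨hx, fun ha => hne (by rw [hx, ha])⟩⟩

theorem processFunction_to_unambiguous_basis_general
    {n : ℕ} (d : Fin n → ℕ)
    (X : Fin n → Type)
    -- the components of the process function, with outcome sets `A k = Fin (d k)`
    (w : ∀ k : Fin n, (∀ j : {j : Fin n // j ≠ k}, Fin (d j)) → X k)
    (hw : IsProcessFunction (A := fun k => Fin (d k)) (X := X)
      (fun (a : ∀ k, Fin (d k)) (k : Fin n) => w k (fun j => a j)))
    -- local unitaries for each party and setting
    (U : ∀ k : Fin n, X k →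
      (EuclideanSpace ℂ (Fin (d k)) ≃ₗᵢ[ℂ] EuclideanSpace ℂ (Fin (d k))))
    -- the unambiguity condition on the unitaries (Eq. (26)):
    -- for `(a_k, x_k) ≠ (a'_k, x'_k)`,
    -- `⟪U^{x'} e_{a'}, U^{x} e_{a}⟫ = 0 ↔ (x' = x ∧ a' ≠ a)`
    (hU : ∀ (k : Fin n) (a a' : Fin (d k)) (x x' : X k),
      (a, x) ≠ (a', x') →
      ((inner ℂ (U k x' (EuclideanSpace.single a' (1 : ℂ)))
          (U k x (EuclideanSpace.single a (1 : ℂ))) : ℂ) = 0 ↔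
        (x' = x ∧ a' ≠ a))) :
    -- each setting family is an orthonormal basis of `ℂ^{d_k}`
    (∀ (k : Fin n) (x : X k),
      Orthonormal ℂ (fun a : Fin (d k) =>
        U k x (EuclideanSpace.single a (1 : ℂ)))) ∧
    -- the events `a ↦ (a, (w_k(a_{∖k}))_k)` are pairwise distinct
    Function.Injective (fun a : ∀ k, Fin (d k) =>
      (a, fun k : Fin n => w k (fun j => a j))) ∧
    -- their product vectors are pairwise orthogonal
    (∀ a a' : ∀ k, Fin (d k), a ≠ a' →
      (∏ k : Fin n,
        (inner ℂ (U k (w k fun j => a j) (EuclideanSpace.single (a k) (1 : ℂ)))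
          (U k (w k fun j => a' j)
            (EuclideanSpace.single (a' k) (1 : ℂ))) : ℂ)) = 0) ∧
    -- and the unambiguity condition holds for the occurring labels
    (∀ (k : Fin n) (b b' : Fin (d k)) (x x' : X k),
      (∃ a : ∀ i, Fin (d i), a k = b ∧ w k (fun j => a j) = x) →
      (∃ a : ∀ i, Fin (d i), a k = b' ∧ w k (fun j => a j) = x') →
      U k x (EuclideanSpace.single b (1 : ℂ)) ≠
        U k x' (EuclideanSpace.single b' (1 : ℂ)) →
      ((inner ℂ (U k x (EuclideanSpace.single b (1 : ℂ)))
          (U k x' (EuclideanSpace.single b' (1 : ℂ))) : ℂ) = 0 ↔ x = x')) := by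
  have horth (k : Fin n) (x : X k) :
      Orthonormal ℂ fun a : Fin (d k) => U k x (EuclideanSpace.single a (1 : ℂ)) :=
    EuclideanSpace.orthonormal_single.comp_linearIsometryEquiv (U k x)
  refine ⟨horth, fun a a' h => congrArg Prod.fst h, fun a a' hne => ?_,
    fun k b b' x x' _ _ hne => inner_eq_zero_iff_of_ne_of_unambiguous (hU k) hne⟩
  obtain ⟨k, hsetting, houtcome⟩ := hw.exists_apply_eq_and_ne_of_ne hne
  refine Finset.prod_eq_zero (Finset.mem_univ k) ?_
  rw [hsetting]
  exact (horth k _).inner_eq_zero houtcome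

/-- **Theorem 4: any process function, encoded by local unitaries satisfying
the unambiguity condition, yields a complete unambiguous product basis**:
with local vectors `|(a_k|x_k)⟩ := U_k^{x_k} e_{a_k}` and the `∏_k d_k`
events `(a | (w_k(a_{∖k}))_k)`, each setting family is an orthonormal basis,
the events are pairwise distinct with pairwise orthogonal product vectors,
and the unambiguity condition holds. -/
theorem processFunction_to_unambiguous_basis
    {n : ℕ} (hn : 1 ≤ n) (d : Fin n → ℕ) (hd : ∀ k, 1 ≤ d k)
    (X : Fin n → Type) [∀ k, Fintype (X k)] [∀ k, Nonempty (X k)]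
    -- the components of the process function, with outcome sets `A k = Fin (d k)`
    (w : ∀ k : Fin n, (∀ j : {j : Fin n // j ≠ k}, Fin (d j)) → X k)
    (hw : IsProcessFunction (A := fun k => Fin (d k)) (X := X)
      (fun (a : ∀ k, Fin (d k)) (k : Fin n) => w k (fun j => a j)))
    -- local unitaries for each party and setting
    (U : ∀ k : Fin n, X k →
      (EuclideanSpace ℂ (Fin (d k)) ≃ₗᵢ[ℂ] EuclideanSpace ℂ (Fin (d k))))
    -- the unambiguity condition on the unitaries (Eq. (26)):
    -- for `(a_k, x_k) ≠ (a'_k, x'_k)`,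
    -- `⟪U^{x'} e_{a'}, U^{x} e_{a}⟫ = 0 ↔ (x' = x ∧ a' ≠ a)`
    (hU : ∀ (k : Fin n) (a a' : Fin (d k)) (x x' : X k),
      (a, x) ≠ (a', x') →
      ((inner ℂ (U k x' (EuclideanSpace.single a' (1 : ℂ)))
          (U k x (EuclideanSpace.single a (1 : ℂ))) : ℂ) = 0 ↔
        (x' = x ∧ a' ≠ a))) :
    -- each setting family is an orthonormal basis of `ℂ^{d_k}`
    (∀ (k : Fin n) (x : X k),
      Orthonormal ℂ (fun a : Fin (d k) =>
        U k x (EuclideanSpace.single a (1 : ℂ)))) ∧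
    -- the events `a ↦ (a, (w_k(a_{∖k}))_k)` are pairwise distinct
    Function.Injective (fun a : ∀ k, Fin (d k) =>
      (a, fun k : Fin n => w k (fun j => a j))) ∧
    -- their product vectors are pairwise orthogonal
    (∀ a a' : ∀ k, Fin (d k), a ≠ a' →
      (∏ k : Fin n,
        (inner ℂ (U k (w k fun j => a j) (EuclideanSpace.single (a k) (1 : ℂ)))
          (U k (w k fun j => a' j)
            (EuclideanSpace.single (a' k) (1 : ℂ))) : ℂ)) = 0) ∧
    -- and the unambiguity condition holds for the occurring labels
    (∀ (k : Fin n) (b b' : Fin (d k)) (x x' : X k),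
      (∃ a : ∀ i, Fin (d i), a k = b ∧ w k (fun j => a j) = x) →
      (∃ a : ∀ i, Fin (d i), a k = b' ∧ w k (fun j => a j) = x') →
      U k x (EuclideanSpace.single b (1 : ℂ)) ≠
        U k x' (EuclideanSpace.single b' (1 : ℂ)) →
      ((inner ℂ (U k x (EuclideanSpace.single b (1 : ℂ)))
          (U k x' (EuclideanSpace.single b' (1 : ℂ))) : ℂ) = 0 ↔ x = x')) :=
  processFunction_to_unambiguous_basis_general d X w hw U hU
end
end

section
/- Let a complete product basis be weakly unambiguous, i.e.: (i) for every party k and any two distinct settings x_k ≠ x'_k occurring among the events, the setting bases are disjoint as sets of vectors (|(a_k|x_k)⟩ ≠ |(a'_k|x'_k)⟩ for all a_k, a'_k); and (ii) the events satisfy pairwise exclusivity. Then there exists an unambiguous complete product basis with the same setting sets X_k, the same outcome sets A_k, and the same family of events (a^j | x^j) (hence the same induced function w): that is, one can choose for each party k and each occurring setting x_k a new orthonormal basis (|(a_k|x_k)⟩')_{a_k ∈ A_k} of ℂ^{d_k} such that the resulting product vectors are still pairwise orthogonal and the unambiguity condition holds. -/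
/-!
Pairwise exclusivity alone makes the product vectors of distinct events orthogonal, whatever
local orthonormal bases are used. So it suffices to give each party orthonormal bases, one per
setting, such that no vector of one is orthogonal to a vector of another. The columns of the
unitaries `U_z = 1 + (z - 1) P`, with `P` the projection onto the all-ones direction and
`‖z‖ = 1`, do this: `⟪U_z e_i, U_z' e_j⟫ = δ_ij + (conj z * z' - 1) / d`, which never vanishes
when `z' ≠ ± z`, e.g. for distinct phases `z, z'` of positive real part.
-/

open Complex ComplexConjugate

lemma ne_one_sub_natCast_of_norm_eq_one {w : ℂ} (hw : ‖w‖ = 1) (hw' : w ≠ -1) {n : ℕ}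
    (hn : n ≠ 0) : w ≠ 1 - n := by
  rintro rfl
  have h : |(1 : ℝ) - n| = 1 := by
    rwa [← ofReal_natCast, ← ofReal_one, ← ofReal_sub, norm_real, Real.norm_eq_abs] at hw
  have hn2 : n = 2 := by
    have : (1 : ℝ) ≤ n := by exact_mod_cast Nat.one_le_iff_ne_zero.mpr hn
    rw [abs_of_nonpos (by linarith)] at h
    exact_mod_cast (by linarith : (n : ℝ) = 2)
  subst hn2
  norm_num at hw'

lemma conj_mul_eq_iff {z z' c : ℂ} (hz : ‖z‖ = 1) : conj z * z' = c ↔ z' = c * z := by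
  constructor
  · rintro rfl
    rw [mul_comm, ← mul_assoc, mul_conj', hz]; simp
  · rintro rfl
    rw [mul_left_comm, conj_mul', hz]; simp

section TwistedBasis

variable {ι : Type*} [Fintype ι] [DecidableEq ι]

noncomputable def twistedBasis (z : ℂ) (i : ι) : EuclideanSpace ℂ ι :=
  EuclideanSpace.single i 1 + ((z - 1) / Fintype.card ι) • WithLp.toLp 2 (fun _ => 1)

lemma inner_twistedBasis (z z' : ℂ) (i j : ι) :
    inner ℂ (twistedBasis z i) (twistedBasis z' j) =
      (if i = j then 1 else 0) + (conj z * z' - 1) / Fintype.card ι := by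
  have : Nonempty ι := ⟨i⟩
  have hcard : (Fintype.card ι : ℂ) ≠ 0 := Nat.cast_ne_zero.mpr Fintype.card_ne_zero
  have hones : inner ℂ (WithLp.toLp 2 (fun _ => (1 : ℂ)) : EuclideanSpace ℂ ι)
      (WithLp.toLp 2 fun _ => 1) = Fintype.card ι := by
    simp only [PiLp.inner_apply]; simp
  simp only [twistedBasis, inner_add_left, inner_add_right, inner_smul_left, inner_smul_right,
    EuclideanSpace.inner_single_left, EuclideanSpace.inner_single_right, hones,
    PiLp.single_apply, map_one, one_mul, mul_one, map_div₀, map_sub, map_natCast, eq_comm (a := j)]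
  field_simp
  split_ifs <;> simp only [map_one, map_zero] <;> ring

lemma orthonormal_twistedBasis {z : ℂ} (hz : ‖z‖ = 1) :
    Orthonormal ℂ (twistedBasis (ι := ι) z) := by
  rw [orthonormal_iff_ite]
  intro i j
  rw [inner_twistedBasis, (conj_mul_eq_iff hz).mpr (one_mul z).symm, sub_self, zero_div, add_zero]

lemma inner_twistedBasis_ne_zero {z z' : ℂ} (hz : ‖z‖ = 1) (hz' : ‖z'‖ = 1)
    (hre : 0 < z.re) (hre' : 0 < z'.re) (hne : z ≠ z') (i j : ι) :
    inner ℂ (twistedBasis z i) (twistedBasis z' j) ≠ 0 := by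
  have : Nonempty ι := ⟨i⟩
  have hcard : Fintype.card ι ≠ 0 := Fintype.card_ne_zero
  set w := conj z * z' with hw
  have hw_norm : ‖w‖ = 1 := by simp [hw, hz, hz']
  have hw_one : w ≠ 1 := fun h => hne ((conj_mul_eq_iff hz).mp h |>.trans (one_mul z)).symm
  have hw_neg_one : w ≠ -1 := fun h => by
    have : z'.re = -z.re := by rw [(conj_mul_eq_iff hz).mp h]; simp
    linarith
  rw [inner_twistedBasis, ← hw]
  split_ifs
  · rw [Ne, add_div_eq_mul_add_div _ _ (Nat.cast_ne_zero.mpr hcard), div_eq_zero_iff, not_or]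
    refine ⟨fun h => ne_one_sub_natCast_of_norm_eq_one hw_norm hw_neg_one hcard ?_,
      Nat.cast_ne_zero.mpr hcard⟩
    linear_combination h
  · rw [zero_add]
    exact div_ne_zero (sub_ne_zero.mpr hw_one) (Nat.cast_ne_zero.mpr hcard)

end TwistedBasis

lemma injective_exp_arctan_mul_I : Function.Injective fun t : ℝ => exp (Real.arctan t * I) := by
  intro t t' h
  have him : ∀ s : ℝ, -Real.pi < (Real.arctan s * I).im ∧ (Real.arctan s * I).im ≤ Real.pi :=
    fun s => by
      simp only [mul_im, ofReal_re, I_im, mul_one, ofReal_im, I_re, mul_zero, add_zero]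
      constructor <;> linarith [Real.neg_pi_div_two_lt_arctan s, Real.arctan_lt_pi_div_two s,
        Real.pi_pos]
  have := exp_inj_of_neg_pi_lt_of_le_pi (him t).1 (him t).2 (him t').1 (him t').2 h
  exact Real.arctan_injective (ofReal_injective (mul_right_cancel₀ I_ne_zero this))

lemma exists_injective_norm_eq_one_re_pos (α : Type*) [Finite α] :
    ∃ z : α → ℂ, Function.Injective z ∧ ∀ a, ‖z a‖ = 1 ∧ 0 < (z a).re := by
  obtain ⟨m, ⟨f⟩⟩ := Finite.exists_equiv_fin α
  refine ⟨fun a => exp (Real.arctan (f a : ℕ) * I),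
    injective_exp_arctan_mul_I.comp (Nat.cast_injective.comp (Fin.val_injective.comp f.injective)),
    fun a => ⟨norm_exp_ofReal_mul_I _, ?_⟩⟩
  rw [exp_ofReal_mul_I_re]
  exact Real.cos_arctan_pos _

lemma prod_inner_eq_zero_of_exclusive {κ : Type*} [Fintype κ] {A X E : κ → Type*}
    [∀ k, NormedAddCommGroup (E k)] [∀ k, InnerProductSpace ℂ (E k)]
    {v : ∀ k, X k → A k → E k} (hv : ∀ k x, Orthonormal ℂ (v k x))
    {a a' : ∀ k, A k} {x x' : ∀ k, X k} (hexcl : ∃ k, x k = x' k ∧ a k ≠ a' k) :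
    ∏ k, inner ℂ (v k (x k) (a k)) (v k (x' k) (a' k)) = 0 := by
  obtain ⟨k, hx, ha⟩ := hexcl
  refine Finset.prod_eq_zero (Finset.mem_univ k) ?_
  rw [hx]
  exact (hv k (x' k)).2 ha

theorem weakly_unambiguous_to_unambiguous_general
    -- `n` parties with local dimensions `d k`
    {n : ℕ} (d : Fin n → ℕ)
    -- outcome sets `A k` with `|A k| = d k`, finite nonempty setting sets `X k`
    (A : Fin n → Type) [∀ k, Fintype (A k)]
    (hA : ∀ k, Fintype.card (A k) = d k)
    (X : Fin n → Type) [∀ k, Fintype (X k)]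
    -- `N = ∏_k d_k` pairwise distinct events with pairwise orthogonal
    -- product vectors (a complete product basis)
    {N : ℕ}
    (e : Fin N → (∀ k, A k) × (∀ k, X k))
    -- (ii) pairwise exclusivity of the events
    (hexcl : ∀ j j' : Fin N, j ≠ j' →
      ∃ k : Fin n, (e j).2 k = (e j').2 k ∧ (e j).1 k ≠ (e j').1 k) :
    ∃ v' : ∀ k : Fin n, X k → A k → EuclideanSpace ℂ (Fin (d k)),
      -- new local orthonormal bases for each setting
      (∀ (k : Fin n) (x : X k), Orthonormal ℂ (v' k x)) ∧
      -- the same events still have pairwise orthogonal product vectors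
      (∀ j j' : Fin N, j ≠ j' →
        (∏ k : Fin n,
          (inner ℂ (v' k ((e j).2 k) ((e j).1 k))
            (v' k ((e j').2 k) ((e j').1 k)) : ℂ)) = 0) ∧
      -- and the unambiguity condition holds
      (∀ (k : Fin n) (a a' : A k) (x x' : X k),
        (∃ j, (e j).1 k = a ∧ (e j).2 k = x) →
        (∃ j, (e j).1 k = a' ∧ (e j).2 k = x') →
        v' k x a ≠ v' k x' a' →
        ((inner ℂ (v' k x a) (v' k x' a') : ℂ) = 0 ↔ x = x')) := by
  choose z hz_inj hz using fun k => exists_injective_norm_eq_one_re_pos (X k)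
  let g k : A k ≃ Fin (d k) := Fintype.equivFinOfCardEq (hA k)
  have hv' : ∀ k x, Orthonormal ℂ fun a => twistedBasis (z k x) (g k a) :=
    fun k x => (orthonormal_twistedBasis (hz k x).1).comp _ (g k).injective
  refine ⟨fun k x a => twistedBasis (z k x) (g k a), hv',
    fun j j' hjj' => prod_inner_eq_zero_of_exclusive hv' (hexcl j j' hjj'), ?_⟩
  intro k a a' x x' _ _ hvne
  constructor
  · intro h
    by_contra hx
    exact inner_twistedBasis_ne_zero (hz k x).1 (hz k x').1 (hz k x).2 (hz k x').2
      ((hz_inj k).ne hx) _ _ h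
  · rintro rfl
    exact (hv' k x).2 fun ha => hvne (ha ▸ rfl)

/-- **Weak unambiguity suffices up to local rotations** (Lemma D.3): if a
complete product basis is weakly unambiguous — its occurring setting bases are
pairwise disjoint as sets of vectors, and its events satisfy pairwise
exclusivity — then there is a choice of new local orthonormal bases, with the
same setting sets, outcome sets, and events (hence the same induced function),
making the basis a complete product basis that is unambiguous. -/
theorem weakly_unambiguous_to_unambiguous
    -- `n` parties with local dimensions `d k`
    {n : ℕ} (hn : 1 ≤ n) (d : Fin n → ℕ) (hd : ∀ k, 1 ≤ d k)
    -- outcome sets `A k` with `|A k| = d k`, finite nonempty setting sets `X k`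
    (A : Fin n → Type) [∀ k, Fintype (A k)] [∀ k, DecidableEq (A k)]
    (hA : ∀ k, Fintype.card (A k) = d k)
    (X : Fin n → Type) [∀ k, Fintype (X k)] [∀ k, Nonempty (X k)]
    [∀ k, DecidableEq (X k)]
    -- local vectors `|(a_k|x_k)⟩`, an orthonormal basis for each setting
    (v : ∀ k : Fin n, X k → A k → EuclideanSpace ℂ (Fin (d k)))
    (hv : ∀ (k : Fin n) (x : X k), Orthonormal ℂ (v k x))
    -- `N = ∏_k d_k` pairwise distinct events with pairwise orthogonal
    -- product vectors (a complete product basis)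
    {N : ℕ} (hN : N = ∏ k, d k)
    (e : Fin N → (∀ k, A k) × (∀ k, X k))
    (he : Function.Injective e)
    (horth : ∀ j j' : Fin N, j ≠ j' →
      (∏ k : Fin n,
        (inner ℂ (v k ((e j).2 k) ((e j).1 k))
          (v k ((e j').2 k) ((e j').1 k)) : ℂ)) = 0)
    -- (i) occurring setting bases are disjoint as sets of vectors
    (hdisj : ∀ (k : Fin n) (x x' : X k),
      (∃ j, (e j).2 k = x) → (∃ j, (e j).2 k = x') → x ≠ x' →
      ∀ a a' : A k, v k x a ≠ v k x' a')
    -- (ii) pairwise exclusivity of the events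
    (hexcl : ∀ j j' : Fin N, j ≠ j' →
      ∃ k : Fin n, (e j).2 k = (e j').2 k ∧ (e j).1 k ≠ (e j').1 k) :
    ∃ v' : ∀ k : Fin n, X k → A k → EuclideanSpace ℂ (Fin (d k)),
      -- new local orthonormal bases for each setting
      (∀ (k : Fin n) (x : X k), Orthonormal ℂ (v' k x)) ∧
      -- the same events still have pairwise orthogonal product vectors
      (∀ j j' : Fin N, j ≠ j' →
        (∏ k : Fin n,
          (inner ℂ (v' k ((e j).2 k) ((e j).1 k))
            (v' k ((e j').2 k) ((e j').1 k)) : ℂ)) = 0) ∧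
      -- and the unambiguity condition holds
      (∀ (k : Fin n) (a a' : A k) (x x' : X k),
        (∃ j, (e j).1 k = a ∧ (e j).2 k = x) →
        (∃ j, (e j).1 k = a' ∧ (e j).2 k = x') →
        v' k x a ≠ v' k x' a' →
        ((inner ℂ (v' k x a) (v' k x' a') : ℂ) = 0 ↔ x = x')) :=
  weakly_unambiguous_to_unambiguous_general d A hA X e hexcl
end

section
/- Let n ≥ 2, let D be a finite set with |D| ≥ 2, set A_k = X_k = D for all k ∈ {1,…,n}, and define the n-partite global cyclic loop w : D^n → D^n by w_k(a) = a_{k+1 mod n} (so each party's input is the next party's output, cyclically). Then: (a) for every party k and every fixed a_k ∈ D, the output-reduced function w^{a_k} is a valid (n−1)-partite process function; but (b) w is not an n-partite process function — in particular, for the identity local intervention f_k = id, the map x ↦ w(f(x)) has |D| ≥ 2 fixed points. -/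
/-!
Removing party `k` cuts the loop into a chain: ranking each remaining party `j` by the backwards
distance `k - j`, the input of `j` depends only on the output of `j + 1`, of strictly lower rank.
Iterating the induced map `n` times therefore forgets the starting point, which yields exactly one
fixed point. For the whole loop under the identity intervention, the equations `x_k = x_{k+1}` force
`x` to be constant, and each of the `|D| ≥ 2` constants is a fixed point.
-/

noncomputable section

section CausalRank

variable {α : Type*} {ι : Type*} {X : ι → Type*}

theorem existsUnique_fixedPt_of_iterate_eq [Nonempty α] {G : α → α} {N : ℕ}
    (hN : ∀ x y, G^[N] x = G^[N] y) : ∃! x, G x = x := by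
  obtain ⟨x₀⟩ := ‹Nonempty α›
  refine ⟨G^[N] x₀, ?_, fun z hz => ?_⟩
  · show G (G^[N] x₀) = _
    rw [← Function.iterate_succ_apply' G N, Function.iterate_succ_apply, hN]
  · rw [← Function.iterate_fixed hz N, hN]

theorem iterate_apply_eq_of_rank_lt {G : (∀ i, X i) → ∀ i, X i} (ρ : ι → ℕ)
    (hG : ∀ x y j, (∀ i, ρ i < ρ j → x i = y i) → G x j = G y j) :
    ∀ m x y j, ρ j < m → G^[m] x j = G^[m] y j := by
  intro m
  induction m with
  | zero => intro x y j hj; omega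
  | succ m ih =>
    intro x y j hj
    rw [Function.iterate_succ_apply', Function.iterate_succ_apply']
    exact hG _ _ j fun i hi => ih x y i (by omega)

theorem isProcessFunction_of_rank {ι : Type} {A X : ι → Type} [Nonempty (∀ i, X i)]
    {w : (∀ i, A i) → ∀ i, X i} (ρ : ι → ℕ) {N : ℕ} (hρ : ∀ i, ρ i < N)
    (hw : ∀ a a' j, (∀ i, ρ i < ρ j → a i = a' i) → w a j = w a' j) :
    IsProcessFunction w := fun f =>
  existsUnique_fixedPt_of_iterate_eq fun x y => funext fun j =>
    iterate_apply_eq_of_rank_lt ρ (fun x y j hxy => hw _ _ j fun i hi => by rw [hxy i hi])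
      N x y j (hρ j)

end CausalRank

section CyclicLoop

variable {n : ℕ} [NeZero n] {D : Type}

theorem apply_eq_apply_zero_of_forall_add_one {x : Fin n → D} (hx : ∀ k, x (k + 1) = x k)
    (k : Fin n) : x k = x 0 := by
  obtain ⟨m, rfl⟩ := Nat.exists_eq_succ_of_ne_zero (NeZero.ne n)
  induction k using Fin.induction with
  | zero => rfl
  | succ k ih => rw [← Fin.coeSucc_eq_succ, hx, ih]

theorem val_sub_add_one_lt {j k : Fin n} (hj : j ≠ k) :
    ((k - (j + 1) : Fin n) : ℕ) < ((k - j : Fin n) : ℕ) := by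
  have hkj : k - j ≠ 0 := sub_ne_zero.mpr hj.symm
  rw [← sub_sub, Fin.val_sub_one_of_ne_zero hkj]
  exact Nat.sub_lt (Nat.pos_of_ne_zero (Fin.val_ne_zero_iff.mpr hkj)) one_pos

def cyclicLoop (a : Fin n → D) : Fin n → D := fun k => a (k + 1)

def cyclicLoopFixedPointsEquiv : {x : Fin n → D // cyclicLoop x = x} ≃ D where
  toFun x := x.1 0
  invFun c := ⟨fun _ => c, rfl⟩
  left_inv x := Subtype.ext <| funext fun k =>
    (apply_eq_apply_zero_of_forall_add_one (fun j => congrFun x.2 j) k).symm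
  right_inv _ := rfl

variable [Nonempty D]

theorem outputReducedFn_cyclicLoop_apply (k : Fin n) (b : D) (a : {j : Fin n // j ≠ k} → D)
    (j : {j : Fin n // j ≠ k}) :
    outputReducedFn (A := fun _ => D) (X := fun _ => D) cyclicLoop k b a j =
      if h : (j : Fin n) + 1 = k then b else a ⟨j + 1, h⟩ :=
  rfl

theorem isProcessFunction_outputReducedFn_cyclicLoop (k : Fin n) (b : D) :
    IsProcessFunction (outputReducedFn (A := fun _ => D) (X := fun _ => D) cyclicLoop k b) := by
  refine isProcessFunction_of_rank (fun j => (k - j : Fin n).val) (fun j => Fin.is_lt _) ?_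
  intro a a' j h
  rw [outputReducedFn_cyclicLoop_apply, outputReducedFn_cyclicLoop_apply]
  split
  · rfl
  · exact h _ (val_sub_add_one_lt j.2)

end CyclicLoop

theorem globalLoop_not_processFunction_general
    {n : ℕ} [NeZero n]
    (D : Type) [Fintype D] [DecidableEq D] [Nonempty D] (hD : 2 ≤ Fintype.card D)
    (w : (∀ _ : Fin n, D) → ∀ _ : Fin n, D)
    (hwdef : ∀ (a : Fin n → D) (k : Fin n), w a k = a (k + 1)) :
    (∀ (k : Fin n) (b : D),
        IsProcessFunction
          (outputReducedFn (A := fun _ : Fin n => D) (X := fun _ : Fin n => D)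
            w k b)) ∧
    ¬ IsProcessFunction (A := fun _ : Fin n => D) (X := fun _ : Fin n => D) w ∧
    Fintype.card {x : Fin n → D // w (fun k => id (x k)) = x} =
      Fintype.card D := by
  obtain rfl : w = cyclicLoop := funext fun a => funext (hwdef a)
  have hcard : Fintype.card {x : Fin n → D // cyclicLoop (fun k => id (x k)) = x} =
      Fintype.card D :=
    Fintype.card_congr cyclicLoopFixedPointsEquiv
  refine ⟨isProcessFunction_outputReducedFn_cyclicLoop, fun hw => ?_, hcard⟩
  obtain ⟨_⟩ := (unique_subtype_iff_existsUnique _).mpr (hw fun _ => id)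
  have := Fintype.card_unique (α := {x : Fin n → D // cyclicLoop (fun k => id (x k)) = x})
  omega

/-- **The global cyclic loop is not a process function, although all its
output-reduced functions are**: for `n ≥ 2` parties with common output/input
set `D` (`|D| ≥ 2`), the cyclic loop `w_k(a) = a_{k+1 (mod n)}` satisfies
(a) every output-reduced function `w^{a_k}` is a valid `(n−1)`-partite
process function; but (b) `w` is not an `n`-partite process function — in
particular, for the identity local intervention the fixed-point equation
`w x = x` has exactly `|D| ≥ 2` solutions. -/
theorem globalLoop_not_processFunction
    {n : ℕ} [NeZero n] (hn : 2 ≤ n)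
    (D : Type) [Fintype D] [DecidableEq D] [Nonempty D] (hD : 2 ≤ Fintype.card D)
    (w : (∀ _ : Fin n, D) → ∀ _ : Fin n, D)
    (hwdef : ∀ (a : Fin n → D) (k : Fin n), w a k = a (k + 1)) :
    (∀ (k : Fin n) (b : D),
        IsProcessFunction
          (outputReducedFn (A := fun _ : Fin n => D) (X := fun _ : Fin n => D)
            w k b)) ∧
    ¬ IsProcessFunction (A := fun _ : Fin n => D) (X := fun _ : Fin n => D) w ∧
    Fintype.card {x : Fin n → D // w (fun k => id (x k)) = x} =
      Fintype.card D :=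
  globalLoop_not_processFunction_general D hD w hwdef

end
end

section
/- Let A, B, C, X, Y, Z be finite nonempty sets and let w be the tripartite non-self-signaling function w(a,b,c) = (w_x(b,c), w_y(a), w_z(a)) with w_x : B × C → X, w_y : A → Y, w_z : A → Z (the second and third components depend only on the first party's output). Suppose all output-reduced functions are valid bipartite process functions: for every a ∈ A, the constant bipartite function (b,c) ↦ (w_y(a), w_z(a)); for every b ∈ B, the function (a,c) ↦ (w_x(b,c), w_z(a)); and for every c ∈ C, the function (a,b) ↦ (w_x(b,c), w_y(a)). Then w is a tripartite process function. -/
/-- A bipartite process function (unique fixed-point property for two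
parties, with outputs `A, B` and inputs `X, Y`). -/
def IsPF2 {A B X Y : Type} (w : A → B → X × Y) : Prop :=
  ∀ (f : X → A) (g : Y → B), ∃! p : X × Y, w (f p.1) (g p.2) = p

/-- A tripartite process function (unique fixed-point property for three
parties, with outputs `A, B, C` and inputs `X, Y, Z`). -/
def IsPF3 {A B C X Y Z : Type} (w : A → B → C → X × Y × Z) : Prop :=
  ∀ (f : X → A) (g : Y → B) (h : Z → C),
    ∃! p : X × Y × Z, w (f p.1) (g p.2.1) (h p.2.2) = p

/-- Dichotomy for a bipartite process function of the "crossed" form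
`w a c = (u c, v a)`: one of the two components must be constant. -/
lemma pf2_dichotomy {A C X Z : Type}
    (u : C → X) (v : A → Z)
    (h : IsPF2 (fun (a : A) (c : C) => (u c, v a))) :
    (∀ a a', v a = v a') ∨ (∀ c c', u c = u c') := by
  classical
  by_contra hcon
  push_neg at hcon
  obtain ⟨⟨a1, a2, hv⟩, c1, c2, hu⟩ := hcon
  set f : X → A := fun x => if x = u c1 then a1 else a2 with hf
  set g : Z → C := fun z => if z = v a1 then c1 else c2 with hg
  obtain ⟨p, hp, hpu⟩ := h f g
  have h1 : ((u c1, v a1) : X × Z) = p := by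
    apply hpu
    simp [hf, hg]
  have h2 : ((u c2, v a2) : X × Z) = p := by
    apply hpu
    simp only [hf, hg]
    rw [if_neg hv.symm, if_neg hu.symm]
  rw [← h2] at h1
  exact hv (by simpa using congrArg Prod.snd h1)

/-- Tripartite non-self-signaling function of the form
`w(a,b,c) = (w_x(b,c), w_y(a), w_z(a))` (second and third components depend
only on the first party's output): if all output-reduced bipartite functions
are valid bipartite process functions, then `w` is a tripartite process
function. -/
theorem tripartite_case_B1
    (A B C X Y Z : Type)
    [Fintype A] [Nonempty A] [Fintype B] [Nonempty B] [Fintype C] [Nonempty C]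
    [Fintype X] [Nonempty X] [Fintype Y] [Nonempty Y] [Fintype Z] [Nonempty Z]
    (wx : B → C → X) (wy : A → Y) (wz : A → Z)
    (ha : ∀ a : A, IsPF2 (fun (_ : B) (_ : C) => (wy a, wz a)))
    (hb : ∀ b : B, IsPF2 (fun (a : A) (c : C) => (wx b c, wz a)))
    (hc : ∀ c : C, IsPF2 (fun (a : A) (b : B) => (wx b c, wy a))) :
    IsPF3 (fun (a : A) (b : B) (c : C) => (wx b c, wy a, wz a)) := by
  classical
  -- From hb: wz constant, or wx b constant in c for every b.
  have Hb : (∀ a a', wz a = wz a') ∨ (∀ b c c', wx b c = wx b c') := by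
    by_cases hzc : ∀ a a', wz a = wz a'
    · exact Or.inl hzc
    · right
      intro b c c'
      rcases pf2_dichotomy (fun c => wx b c) wz (hb b) with h | h
      · exact absurd h hzc
      · exact h c c'
  -- From hc: wy constant, or wx · c constant in b for every c.
  have Hc : (∀ a a', wy a = wy a') ∨ (∀ c b b', wx b c = wx b' c) := by
    by_cases hyc : ∀ a a', wy a = wy a'
    · exact Or.inl hyc
    · right
      intro c b b'
      rcases pf2_dichotomy (fun b => wx b c) wy (hc c) with h | h
      · exact absurd h hyc
      · exact h b b'
  intro f g h
  -- The composite self-map on X is constant in all four cases.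
  set Φ : X → X := fun x => wx (g (wy (f x))) (h (wz (f x))) with hΦ
  have hconst : ∀ x x', Φ x = Φ x' := by
    intro x x'
    simp only [hΦ]
    rcases Hb with hz | hxc
    · rcases Hc with hy | hxb
      · rw [hz (f x) (f x'), hy (f x) (f x')]
      · rw [hz (f x) (f x'),
          hxb (h (wz (f x'))) (g (wy (f x))) (g (wy (f x')))]
    · rcases Hc with hy | hxb
      · rw [hy (f x) (f x'),
          hxc (g (wy (f x'))) (h (wz (f x))) (h (wz (f x')))]
      · rw [hxc (g (wy (f x))) (h (wz (f x))) (h (wz (f x'))),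
          hxb (h (wz (f x'))) (g (wy (f x))) (g (wy (f x')))]
  obtain ⟨xb⟩ := ‹Nonempty X›
  set x0 : X := Φ xb with hx0
  have hfix : Φ x0 = x0 := hconst x0 xb
  refine ⟨(x0, wy (f x0), wz (f x0)), ?_, ?_⟩
  · simpa [hΦ] using hfix
  · rintro ⟨x, y, z⟩ hpt
    simp only [Prod.mk.injEq] at hpt
    obtain ⟨hx, hy, hz⟩ := hpt
    have hx' : x = x0 := by
      have : Φ x = x := by rw [hΦ]; simp only; rw [hy, hz, hx]
      rw [← this, hconst x xb]
    subst hx'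
    simp [← hy, ← hz]
end

section
/- Let A, B, C, X, Y, Z be finite nonempty sets and let w be the tripartite function of cyclic form w(a,b,c) = (w_x(c), w_y(a), w_z(b)) with w_x : C → X, w_y : A → Y, w_z : B → Z. Then w is a tripartite process function if and only if at least one of the maps w_x, w_y, w_z is constant. -/
open Function

theorem existsUnique_isFixedPt_of_forall_eq {X : Type*} {φ : X → X} {x₀ : X}
    (hφ : ∀ x, φ x = x₀) : ∃! x, IsFixedPt φ x :=
  ⟨x₀, hφ x₀, fun x hx => hx.symm.trans (hφ x)⟩

theorem exists_ne_of_not_exists_forall_eq {α β : Type*} [Nonempty α] {w : α → β}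
    (hw : ¬∃ b, ∀ a, w a = b) : ∃ a₁ a₂, w a₁ ≠ w a₂ := by
  push Not at hw
  obtain ⟨a₂, ha₂⟩ := hw (w (Classical.arbitrary α))
  exact ⟨_, a₂, ha₂.symm⟩

theorem existsUnique_isFixedPt_cyclic_iff_comp {X Y Z : Type*} (u : X → Y) (v : Y → Z)
    (t : Z → X) :
    (∃! p : X × Y × Z, IsFixedPt (fun p => (t p.2.2, u p.1, v p.2.1)) p) ↔
      ∃! x, IsFixedPt (t ∘ v ∘ u) x := by
  have lift : ∀ {x}, IsFixedPt (t ∘ v ∘ u) x →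
      IsFixedPt (fun p : X × Y × Z => (t p.2.2, u p.1, v p.2.1)) (x, u x, v (u x)) :=
    fun hx => by simpa [IsFixedPt] using hx
  have project : ∀ {x y z}, IsFixedPt (fun p : X × Y × Z => (t p.2.2, u p.1, v p.2.1)) (x, y, z) →
      IsFixedPt (t ∘ v ∘ u) x ∧ y = u x ∧ z = v (u x) := by
    intro x y z hp
    simp only [IsFixedPt, Prod.mk.injEq] at hp
    obtain ⟨hx, rfl, rfl⟩ := hp
    exact ⟨hx, rfl, rfl⟩
  constructor
  · rintro ⟨⟨x, y, z⟩, hp, huniq⟩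
    refine ⟨x, (project hp).1, fun x' hx' => ?_⟩
    exact congrArg Prod.fst (huniq _ (lift hx'))
  · rintro ⟨x, hx, huniq⟩
    refine ⟨_, lift hx, fun ⟨x', y', z'⟩ hp => ?_⟩
    obtain ⟨hx', rfl, rfl⟩ := project hp
    rw [huniq x' hx']

theorem isPF3_cyclic_iff {A B C X Y Z : Type} (wx : C → X) (wy : A → Y) (wz : B → Z) :
    IsPF3 (fun a b c => (wx c, wy a, wz b)) ↔
      ∀ (f : X → A) (g : Y → B) (h : Z → C), ∃! x, IsFixedPt (wx ∘ h ∘ wz ∘ g ∘ wy ∘ f) x :=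
  forall₃_congr fun f g h => existsUnique_isFixedPt_cyclic_iff_comp (wy ∘ f) (wz ∘ g) (wx ∘ h)

theorem exists_not_existsUnique_isFixedPt_loop {A B C X Y Z : Type} {wx : C → X} {wy : A → Y}
    {wz : B → Z} {a₁ a₂ : A} {b₁ b₂ : B} {c₁ c₂ : C} (ha : wy a₁ ≠ wy a₂) (hb : wz b₁ ≠ wz b₂)
    (hc : wx c₁ ≠ wx c₂) :
    ∃ (f : X → A) (g : Y → B) (h : Z → C), ¬∃! x, IsFixedPt (wx ∘ h ∘ wz ∘ g ∘ wy ∘ f) x := by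
  classical
  refine ⟨update (fun _ => a₂) (wx c₁) a₁, update (fun _ => b₂) (wy a₁) b₁,
    update (fun _ => c₂) (wz b₁) c₁, fun huniq => hc (huniq.unique ?_ ?_)⟩ <;>
    simp [IsFixedPt, ha.symm, hb.symm, hc.symm]

theorem cyclic_tripartite_processFunction_iff_some_constant_general
    (A B C X Y Z : Type)
    [Nonempty A] [Nonempty B] [Nonempty C]
    (wx : C → X) (wy : A → Y) (wz : B → Z) :
    IsPF3 (fun (a : A) (b : B) (c : C) => (wx c, wy a, wz b)) ↔
      ((∃ x0 : X, ∀ c, wx c = x0) ∨ (∃ y0 : Y, ∀ a, wy a = y0) ∨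
        (∃ z0 : Z, ∀ b, wz b = z0)) := by
  rw [isPF3_cyclic_iff]
  constructor
  · intro hpf
    by_contra hnone
    simp only [not_or] at hnone
    obtain ⟨hx, hy, hz⟩ := hnone
    obtain ⟨c₁, c₂, hc⟩ := exists_ne_of_not_exists_forall_eq hx
    obtain ⟨a₁, a₂, ha⟩ := exists_ne_of_not_exists_forall_eq hy
    obtain ⟨b₁, b₂, hb⟩ := exists_ne_of_not_exists_forall_eq hz
    obtain ⟨f, g, h, hf⟩ := exists_not_existsUnique_isFixedPt_loop ha hb hc
    exact hf (hpf f g h)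
  · rintro (⟨x0, hx0⟩ | ⟨y0, hy0⟩ | ⟨z0, hz0⟩) f g h
    · exact existsUnique_isFixedPt_of_forall_eq fun x => hx0 _
    · exact existsUnique_isFixedPt_of_forall_eq fun x => congrArg (wx ∘ h ∘ wz ∘ g) (hy0 (f x))
    · exact existsUnique_isFixedPt_of_forall_eq fun x => congrArg (wx ∘ h) (hz0 (g (wy (f x))))

/-- A tripartite function of cyclic (global-loop) form
`w(a,b,c) = (w_x(c), w_y(a), w_z(b))` is a tripartite process function iff at
least one of `w_x, w_y, w_z` is constant. -/
theorem cyclic_tripartite_processFunction_iff_some_constant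
    (A B C X Y Z : Type)
    [Fintype A] [Nonempty A] [Fintype B] [Nonempty B] [Fintype C] [Nonempty C]
    [Fintype X] [Nonempty X] [Fintype Y] [Nonempty Y] [Fintype Z] [Nonempty Z]
    (wx : C → X) (wy : A → Y) (wz : B → Z) :
    IsPF3 (fun (a : A) (b : B) (c : C) => (wx c, wy a, wz b)) ↔
      ((∃ x0 : X, ∀ c, wx c = x0) ∨ (∃ y0 : Y, ∀ a, wy a = y0) ∨
        (∃ z0 : Z, ∀ b, wz b = z0)) :=
  cyclic_tripartite_processFunction_iff_some_constant_general A B C X Y Z wx wy wz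
end

section
/- Let A, B, C, X, Y, Z be finite nonempty sets and let w(a,b,c) = (w_x(b,c), w_y(a,c), w_z(a,b)) be a tripartite non-self-signaling function. Define A_B = {a : c ↦ w_y(a,c) is constant}, A_C = {a : b ↦ w_z(a,b) is constant}, B_A = {b : c ↦ w_x(b,c) is constant}, B_C = {b : a ↦ w_z(a,b) is constant}, C_A = {c : b ↦ w_x(b,c) is constant}, C_B = {c : a ↦ w_y(a,c) is constant}. Assume: (1) for all a, b, c, the output-reduced functions w^a(b,c) = (w_y(a,c), w_z(a,b)), w^b(a,c) = (w_x(b,c), w_z(a,b)), and w^c(a,b) = (w_x(b,c), w_y(a,c)) are valid bipartite process functions; (2) each of the six sets A_B, A_C, B_A, B_C, C_A, C_B is nonempty; and (3) A_B ≠ A_C, B_A ≠ B_C, C_A ≠ C_B. Then for every party and every local map at that party the reduced function is a valid bipartite process function, and hence w is a tripartite process function. -/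
/-- One-way no-signaling: a non-self-signaling bipartite function that is a
valid process function must have at least one constant component. -/
private lemma oneway {B C Y Z : Type} {F : C → Y} {G : B → Z}
    (h : IsPF2 (fun b c => (F c, G b))) :
    (∀ c₁ c₂, F c₁ = F c₂) ∨ (∀ b₁ b₂, G b₁ = G b₂) := by
  classical
  by_contra hcon
  push_neg at hcon
  obtain ⟨⟨c1, c2, hcne⟩, ⟨b1, b2, hbne⟩⟩ := hcon
  obtain ⟨⟨y, z⟩, hp, -⟩ :=
    h (fun y => if y = F c1 then b2 else b1) (fun z => if z = G b2 then c2 else c1)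
  simp only [Prod.mk.injEq] at hp
  obtain ⟨hy, hz⟩ := hp
  by_cases hyy : y = F c1
  · rw [if_pos hyy] at hz
    rw [if_pos hz.symm] at hy
    exact hcne (hyy.symm.trans hy.symm)
  · rw [if_neg hyy] at hz
    rw [if_neg (fun e => hbne (hz.trans e))] at hy
    exact hyy hy.symm

/-- Case A of the refined output-reduced characterization of tripartite
process functions: if all output-reduced functions of a tripartite
non-self-signaling `w(a,b,c) = (w_x(b,c), w_y(a,c), w_z(a,b))` are valid
bipartite process functions, the six constancy sets
`A_B, A_C, B_A, B_C, C_A, C_B` are all nonempty, and `A_B ≠ A_C`,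
`B_A ≠ B_C`, `C_A ≠ C_B`, then every reduced function (for every party and
every local map) is a valid bipartite process function, and hence `w` is a
tripartite process function. -/
theorem tripartite_case_A
    (A B C X Y Z : Type)
    [Fintype A] [Nonempty A] [Fintype B] [Nonempty B] [Fintype C] [Nonempty C]
    [Fintype X] [Nonempty X] [Fintype Y] [Nonempty Y] [Fintype Z] [Nonempty Z]
    (wx : B → C → X) (wy : A → C → Y) (wz : A → B → Z)
    -- the six constancy sets
    (AB : Set A) (hAB : AB = {a | ∃ y0, ∀ c, wy a c = y0})
    (AC : Set A) (hAC : AC = {a | ∃ z0, ∀ b, wz a b = z0})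
    (BA : Set B) (hBA : BA = {b | ∃ x0, ∀ c, wx b c = x0})
    (BC : Set B) (hBC : BC = {b | ∃ z0, ∀ a, wz a b = z0})
    (CA : Set C) (hCA : CA = {c | ∃ x0, ∀ b, wx b c = x0})
    (CB : Set C) (hCB : CB = {c | ∃ y0, ∀ a, wy a c = y0})
    -- (1) all output-reduced functions are valid bipartite process functions
    (ha : ∀ a : A, IsPF2 (fun (b : B) (c : C) => (wy a c, wz a b)))
    (hb : ∀ b : B, IsPF2 (fun (a : A) (c : C) => (wx b c, wz a b)))
    (hc : ∀ c : C, IsPF2 (fun (a : A) (b : B) => (wx b c, wy a c)))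
    -- (2) the six sets are nonempty
    (h2 : AB.Nonempty ∧ AC.Nonempty ∧ BA.Nonempty ∧ BC.Nonempty ∧
      CA.Nonempty ∧ CB.Nonempty)
    -- (3) they are pairwise distinct per party
    (h3 : AB ≠ AC ∧ BA ≠ BC ∧ CA ≠ CB) :
    ((∀ fA : X → A, IsPF2 (fun (b : B) (c : C) =>
        (wy (fA (wx b c)) c, wz (fA (wx b c)) b))) ∧
     (∀ fB : Y → B, IsPF2 (fun (a : A) (c : C) =>
        (wx (fB (wy a c)) c, wz a (fB (wy a c))))) ∧
     (∀ fC : Z → C, IsPF2 (fun (a : A) (b : B) =>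
        (wx b (fC (wz a b)), wy a (fC (wz a b)))))) ∧
    IsPF3 (fun (a : A) (b : B) (c : C) => (wx b c, wy a c, wz a b)) := by
  obtain ⟨hABn, hACn, hBAn, hBCn, hCAn, hCBn⟩ := h2
  rw [hAB] at hABn
  rw [hAC] at hACn
  rw [hBA] at hBAn
  rw [hBC] at hBCn
  rw [hCA] at hCAn
  rw [hCB] at hCBn
  obtain ⟨aB, yv, haB⟩ := hABn
  obtain ⟨aC, zw, haC⟩ := hACn
  obtain ⟨bA, xv, hbA⟩ := hBAn
  obtain ⟨bC, zv2, hbC⟩ := hBCn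
  obtain ⟨cA, xv2, hcA⟩ := hCAn
  obtain ⟨cB, yv2, hcB⟩ := hCBn
  -- componentwise one-way no-signaling from the output-reduced hypotheses
  have uA : ∀ a, (∀ c₁ c₂, wy a c₁ = wy a c₂) ∨ (∀ b₁ b₂, wz a b₁ = wz a b₂) :=
    fun a => oneway (ha a)
  have uB : ∀ b, (∀ c₁ c₂, wx b c₁ = wx b c₂) ∨ (∀ a₁ a₂, wz a₁ b = wz a₂ b) :=
    fun b => oneway (hb b)
  have uC : ∀ c, (∀ b₁ b₂, wx b₁ c = wx b₂ c) ∨ (∀ a₁ a₂, wy a₁ c = wy a₂ c) :=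
    fun c => oneway (hc c)
  -- constancy in either slot pins the value to the default
  have Dx : ∀ b c,
      ((∀ c₁ c₂, wx b c₁ = wx b c₂) ∨ (∀ b₁ b₂, wx b₁ c = wx b₂ c)) → wx b c = xv := by
    rintro b c (hr | hcol)
    · exact (hr c cA).trans ((hcA b).trans ((hcA bA).symm.trans (hbA cA)))
    · exact (hcol b bA).trans (hbA c)
  have Dy : ∀ a c,
      ((∀ c₁ c₂, wy a c₁ = wy a c₂) ∨ (∀ a₁ a₂, wy a₁ c = wy a₂ c)) → wy a c = yv := by
    rintro a c (hr | hcol)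
    · exact (hr c cB).trans ((hcB a).trans ((hcB aB).symm.trans (haB cB)))
    · exact (hcol a aB).trans (haB c)
  have Dz : ∀ a b,
      ((∀ b₁ b₂, wz a b₁ = wz a b₂) ∨ (∀ a₁ a₂, wz a₁ b = wz a₂ b)) → wz a b = zw := by
    rintro a b (hr | hcol)
    · exact (hr b bC).trans ((hbC a).trans ((hbC aC).symm.trans (haC bC)))
    · exact (hcol a aC).trans (haC b)
  -- deviation lemmas: a non-default output forces the others to default
  have vxZ : ∀ b c, wx b c ≠ xv → ∀ a, wz a b = zw :=
    fun b c hne a =>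
      Dz a b (Or.inr ((uB b).resolve_left (fun hr => hne (Dx b c (Or.inl hr)))))
  have vxY : ∀ b c, wx b c ≠ xv → ∀ a, wy a c = yv :=
    fun b c hne a =>
      Dy a c (Or.inr ((uC c).resolve_left (fun hcol => hne (Dx b c (Or.inr hcol)))))
  have vyZ : ∀ a c, wy a c ≠ yv → ∀ b, wz a b = zw :=
    fun a c hne b =>
      Dz a b (Or.inl ((uA a).resolve_left (fun hr => hne (Dy a c (Or.inl hr)))))
  have vyX : ∀ a c, wy a c ≠ yv → ∀ b, wx b c = xv :=
    fun a c hne b =>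
      Dx b c (Or.inr ((uC c).resolve_right (fun hy => hne (Dy a c (Or.inr hy)))))
  have vzY : ∀ a b, wz a b ≠ zw → ∀ c, wy a c = yv :=
    fun a b hne c =>
      Dy a c (Or.inl ((uA a).resolve_right (fun hz => hne (Dz a b (Or.inl hz)))))
  have vzX : ∀ a b, wz a b ≠ zw → ∀ c, wx b c = xv :=
    fun a b hne c =>
      Dx b c (Or.inl ((uB b).resolve_right (fun hz => hne (Dz a b (Or.inr hz)))))
  clear h3 haB haC hbA hbC hcA hcB uA uB uC Dx Dy Dz ha hb hc hAB hAC hBA hBC hCA hCB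
  -- Part 1: reduced functions for party A
  have part1 : ∀ fA : X → A, IsPF2 (fun (b : B) (c : C) =>
      (wy (fA (wx b c)) c, wz (fA (wx b c)) b)) := by
    intro fA g h
    by_cases hys : wy (fA (wx (g yv) (h zw))) (h zw) = yv
    · by_cases hzs : wz (fA (wx (g yv) (h zw))) (g yv) = zw
      · refine ⟨(yv, zw), ?_, ?_⟩
        · simp only [Prod.mk.injEq]
          exact ⟨hys, hzs⟩
        · rintro ⟨y, z⟩ hq
          simp only [Prod.mk.injEq] at hq ⊢
          obtain ⟨ey, ez⟩ := hq
          have hy1 : y = yv := by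
            by_contra hy'
            have hne : wy (fA (wx (g y) (h z))) (h z) ≠ yv :=
              fun e => hy' (ey.symm.trans e)
            have hz1 : z = zw := ez.symm.trans (vyZ _ _ hne (g y))
            have e1 : wx (g yv) (h zw) = xv := by
              rw [← hz1]; exact vyX _ _ hne (g yv)
            have e2 : wx (g y) (h zw) = xv := by
              rw [← hz1]; exact vyX _ _ hne (g y)
            rw [hz1, e2] at ey
            rw [e1] at hys
            exact hy' (ey.symm.trans hys)
          have hz1 : z = zw := by
            by_contra hz'
            have hne : wz (fA (wx (g y) (h z))) (g y) ≠ zw :=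
              fun e => hz' (ez.symm.trans e)
            have e1 : wx (g y) (h z) = xv := vzX _ _ hne (h z)
            have e2 : wx (g y) (h zw) = xv := vzX _ _ hne (h zw)
            rw [hy1] at e1 e2 ez
            rw [e1] at ez
            rw [e2] at hzs
            exact hz' (ez.symm.trans hzs)
          exact ⟨hy1, hz1⟩
      · have hbx : ∀ c, wx (g yv) c = xv := vzX _ _ hzs
        have hyv' : ∀ c, wy (fA (wx (g yv) (h zw))) c = yv := vzY _ _ hzs
        simp only [hbx] at hyv' hzs
        refine ⟨(yv, wz (fA xv) (g yv)), ?_, ?_⟩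
        · simp only [Prod.mk.injEq, hbx]
          exact ⟨hyv' _, by trivial⟩
        · rintro ⟨y, z⟩ hq
          simp only [Prod.mk.injEq] at hq ⊢
          obtain ⟨ey, ez⟩ := hq
          have hy1 : y = yv := by
            by_contra hy'
            have hne : wy (fA (wx (g y) (h z))) (h z) ≠ yv :=
              fun e => hy' (ey.symm.trans e)
            have hz1 : z = zw := ez.symm.trans (vyZ _ _ hne (g y))
            have e2 : wx (g y) (h zw) = xv := by
              rw [← hz1]; exact vyX _ _ hne (g y)
            rw [hz1, e2] at ey
            exact hy' (ey.symm.trans (hyv' _))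
          subst hy1
          simp only [hbx] at ez
          exact ⟨by trivial, ez.symm⟩
    · have hbxc : ∀ b, wx b (h zw) = xv := vyX _ _ hys
      have hzv' : ∀ b, wz (fA (wx (g yv) (h zw))) b = zw := vyZ _ _ hys
      simp only [hbxc] at hys hzv'
      refine ⟨(wy (fA xv) (h zw), zw), ?_, ?_⟩
      · simp only [Prod.mk.injEq, hbxc]
        exact ⟨by trivial, hzv' _⟩
      · rintro ⟨y, z⟩ hq
        simp only [Prod.mk.injEq] at hq ⊢
        obtain ⟨ey, ez⟩ := hq
        have hz1 : z = zw := by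
          by_contra hz'
          have hne : wz (fA (wx (g y) (h z))) (g y) ≠ zw :=
            fun e => hz' (ez.symm.trans e)
          have e1 : wx (g y) (h z) = xv := vzX _ _ hne (h z)
          have hyv2 : ∀ c, wy (fA (wx (g y) (h z))) c = yv := vzY _ _ hne
          have hy1 : y = yv := ey.symm.trans (hyv2 _)
          rw [hy1] at ez e1
          rw [e1] at ez
          exact hz' (ez.symm.trans (hzv' _))
        subst hz1
        simp only [hbxc] at ey
        exact ⟨ey.symm, by trivial⟩
  -- Part 2: reduced functions for party B
  have part2 : ∀ fB : Y → B, IsPF2 (fun (a : A) (c : C) =>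
      (wx (fB (wy a c)) c, wz a (fB (wy a c)))) := by
    intro fB g h
    by_cases hxs : wx (fB (wy (g xv) (h zw))) (h zw) = xv
    · by_cases hzs : wz (g xv) (fB (wy (g xv) (h zw))) = zw
      · refine ⟨(xv, zw), ?_, ?_⟩
        · simp only [Prod.mk.injEq]
          exact ⟨hxs, hzs⟩
        · rintro ⟨x, z⟩ hq
          simp only [Prod.mk.injEq] at hq ⊢
          obtain ⟨ex, ez⟩ := hq
          have hx1 : x = xv := by
            by_contra hx'
            have hne : wx (fB (wy (g x) (h z))) (h z) ≠ xv :=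
              fun e => hx' (ex.symm.trans e)
            have hz1 : z = zw := ez.symm.trans (vxZ _ _ hne (g x))
            have e1 : wy (g x) (h zw) = yv := by
              rw [← hz1]; exact vxY _ _ hne (g x)
            have e2 : wy (g xv) (h zw) = yv := by
              rw [← hz1]; exact vxY _ _ hne (g xv)
            rw [hz1, e1] at ex
            rw [e2] at hxs
            exact hx' (ex.symm.trans hxs)
          have hz1 : z = zw := by
            by_contra hz'
            have hne : wz (g x) (fB (wy (g x) (h z))) ≠ zw :=
              fun e => hz' (ez.symm.trans e)
            have hyv2 : ∀ c, wy (g x) c = yv := vzY _ _ hne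
            rw [hx1] at ez hyv2
            simp only [hyv2] at ez
            simp only [hyv2] at hzs
            exact hz' (ez.symm.trans hzs)
          exact ⟨hx1, hz1⟩
      · have hyv' : ∀ c, wy (g xv) c = yv := vzY _ _ hzs
        have hxv' : ∀ c, wx (fB (wy (g xv) (h zw))) c = xv := vzX _ _ hzs
        simp only [hyv'] at hxv' hzs
        refine ⟨(xv, wz (g xv) (fB yv)), ?_, ?_⟩
        · simp only [Prod.mk.injEq, hyv']
          exact ⟨hxv' _, by trivial⟩
        · rintro ⟨x, z⟩ hq
          simp only [Prod.mk.injEq] at hq ⊢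
          obtain ⟨ex, ez⟩ := hq
          have hx1 : x = xv := by
            by_contra hx'
            have hne : wx (fB (wy (g x) (h z))) (h z) ≠ xv :=
              fun e => hx' (ex.symm.trans e)
            have hz1 : z = zw := ez.symm.trans (vxZ _ _ hne (g x))
            have e1 : wy (g x) (h zw) = yv := by
              rw [← hz1]; exact vxY _ _ hne (g x)
            rw [hz1, e1] at ex
            exact hx' (ex.symm.trans (hxv' _))
          subst hx1
          simp only [hyv'] at ez
          exact ⟨by trivial, ez.symm⟩
    · have hzv' : ∀ a, wz a (fB (wy (g xv) (h zw))) = zw := vxZ _ _ hxs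
      have hyv' : ∀ a, wy a (h zw) = yv := vxY _ _ hxs
      simp only [hyv'] at hxs hzv'
      refine ⟨(wx (fB yv) (h zw), zw), ?_, ?_⟩
      · simp only [Prod.mk.injEq, hyv']
        exact ⟨by trivial, hzv' _⟩
      · rintro ⟨x, z⟩ hq
        simp only [Prod.mk.injEq] at hq ⊢
        obtain ⟨ex, ez⟩ := hq
        have hz1 : z = zw := by
          by_contra hz'
          have hne : wz (g x) (fB (wy (g x) (h z))) ≠ zw :=
            fun e => hz' (ez.symm.trans e)
          have hxv2 : ∀ c, wx (fB (wy (g x) (h z))) c = xv := vzX _ _ hne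
          have hx1 : x = xv := ex.symm.trans (hxv2 _)
          have hyv2 : ∀ c, wy (g x) c = yv := vzY _ _ hne
          rw [hx1] at ez hyv2
          simp only [hyv2] at ez
          exact hz' (ez.symm.trans (hzv' _))
        subst hz1
        simp only [hyv'] at ex
        exact ⟨ex.symm, by trivial⟩
  -- Part 3: reduced functions for party C
  have part3 : ∀ fC : Z → C, IsPF2 (fun (a : A) (b : B) =>
      (wx b (fC (wz a b)), wy a (fC (wz a b)))) := by
    intro fC g h
    by_cases hxs : wx (h yv) (fC (wz (g xv) (h yv))) = xv
    · by_cases hys : wy (g xv) (fC (wz (g xv) (h yv))) = yv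
      · refine ⟨(xv, yv), ?_, ?_⟩
        · simp only [Prod.mk.injEq]
          exact ⟨hxs, hys⟩
        · rintro ⟨x, y⟩ hq
          simp only [Prod.mk.injEq] at hq ⊢
          obtain ⟨ex, ey⟩ := hq
          have hx1 : x = xv := by
            by_contra hx'
            have hne : wx (h y) (fC (wz (g x) (h y))) ≠ xv :=
              fun e => hx' (ex.symm.trans e)
            have hy1 : y = yv := ey.symm.trans (vxY _ _ hne (g x))
            have e1 : wz (g x) (h yv) = zw := by
              rw [← hy1]; exact vxZ _ _ hne (g x)
            have e2 : wz (g xv) (h yv) = zw := by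
              rw [← hy1]; exact vxZ _ _ hne (g xv)
            rw [hy1, e1] at ex
            rw [e2] at hxs
            exact hx' (ex.symm.trans hxs)
          have hy1 : y = yv := by
            by_contra hy'
            have hne : wy (g x) (fC (wz (g x) (h y))) ≠ yv :=
              fun e => hy' (ey.symm.trans e)
            have hzv2 : ∀ b, wz (g x) b = zw := vyZ _ _ hne
            rw [hx1] at ey hzv2
            simp only [hzv2] at ey
            simp only [hzv2] at hys
            exact hy' (ey.symm.trans hys)
          exact ⟨hx1, hy1⟩
      · have hzv' : ∀ b, wz (g xv) b = zw := vyZ _ _ hys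
        have hxv' : ∀ b, wx b (fC (wz (g xv) (h yv))) = xv := vyX _ _ hys
        simp only [hzv'] at hys hxv' hxs
        refine ⟨(xv, wy (g xv) (fC zw)), ?_, ?_⟩
        · simp only [Prod.mk.injEq, hzv']
          exact ⟨hxv' _, by trivial⟩
        · rintro ⟨x, y⟩ hq
          simp only [Prod.mk.injEq] at hq ⊢
          obtain ⟨ex, ey⟩ := hq
          have hx1 : x = xv := by
            by_contra hx'
            have hne : wx (h y) (fC (wz (g x) (h y))) ≠ xv :=
              fun e => hx' (ex.symm.trans e)
            have hy1 : y = yv := ey.symm.trans (vxY _ _ hne (g x))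
            have e1 : wz (g x) (h yv) = zw := by
              rw [← hy1]; exact vxZ _ _ hne (g x)
            rw [hy1, e1] at ex
            exact hx' (ex.symm.trans (hxv' _))
          subst hx1
          simp only [hzv'] at ey
          exact ⟨by trivial, ey.symm⟩
    · have hzv' : ∀ a, wz a (h yv) = zw := vxZ _ _ hxs
      have hyv' : ∀ a, wy a (fC (wz (g xv) (h yv))) = yv := vxY _ _ hxs
      simp only [hzv'] at hxs hyv'
      refine ⟨(wx (h yv) (fC zw), yv), ?_, ?_⟩
      · simp only [Prod.mk.injEq, hzv']
        exact ⟨by trivial, hyv' _⟩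
      · rintro ⟨x, y⟩ hq
        simp only [Prod.mk.injEq] at hq ⊢
        obtain ⟨ex, ey⟩ := hq
        have hy1 : y = yv := by
          by_contra hy'
          have hne : wy (g x) (fC (wz (g x) (h y))) ≠ yv :=
            fun e => hy' (ey.symm.trans e)
          have hxv2 : ∀ b, wx b (fC (wz (g x) (h y))) = xv := vyX _ _ hne
          have hx1 : x = xv := ex.symm.trans (hxv2 _)
          have hzv2 : ∀ b, wz (g x) b = zw := vyZ _ _ hne
          rw [hx1] at ey hzv2
          simp only [hzv2] at ey
          exact hy' (ey.symm.trans (hyv' _))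
        subst hy1
        simp only [hzv'] at ex
        exact ⟨ex.symm, by trivial⟩
  -- Part 4: the tripartite unique fixed-point property
  have part4 : IsPF3 (fun (a : A) (b : B) (c : C) => (wx b c, wy a c, wz a b)) := by
    intro f g h
    by_cases hxs : wx (g yv) (h zw) = xv
    · by_cases hys : wy (f xv) (h zw) = yv
      · by_cases hzs : wz (f xv) (g yv) = zw
        · refine ⟨(xv, yv, zw), ?_, ?_⟩
          · simp only [Prod.mk.injEq]
            exact ⟨hxs, hys, hzs⟩
          · rintro ⟨x, y, z⟩ hq
            simp only [Prod.mk.injEq] at hq ⊢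
            obtain ⟨ex, ey, ez⟩ := hq
            have hy1 : y = yv := by
              by_contra hy'
              have hne : wy (f x) (h z) ≠ yv := fun e => hy' (ey.symm.trans e)
              have hz1 : z = zw := ez.symm.trans (vyZ _ _ hne (g y))
              have hx1 : x = xv := ex.symm.trans (vyX _ _ hne (g y))
              rw [hx1, hz1] at ey
              exact hy' (ey.symm.trans hys)
            have hz1 : z = zw := by
              by_contra hz'
              have hne : wz (f x) (g y) ≠ zw := fun e => hz' (ez.symm.trans e)
              have hx1 : x = xv := ex.symm.trans (vzX _ _ hne (h z))
              rw [hx1, hy1] at ez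
              exact hz' (ez.symm.trans hzs)
            have hx1 : x = xv := by
              rw [hy1, hz1] at ex
              exact ex.symm.trans hxs
            exact ⟨hx1, hy1, hz1⟩
        · have hyv' : ∀ c, wy (f xv) c = yv := vzY _ _ hzs
          have hxv' : ∀ c, wx (g yv) c = xv := vzX _ _ hzs
          refine ⟨(xv, yv, wz (f xv) (g yv)), ?_, ?_⟩
          · simp only [Prod.mk.injEq]
            exact ⟨hxv' _, hyv' _, by trivial⟩
          · rintro ⟨x, y, z⟩ hq
            simp only [Prod.mk.injEq] at hq ⊢
            obtain ⟨ex, ey, ez⟩ := hq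
            have hy1 : y = yv := by
              by_contra hy'
              have hne : wy (f x) (h z) ≠ yv := fun e => hy' (ey.symm.trans e)
              have hz1 : z = zw := ez.symm.trans (vyZ _ _ hne (g y))
              have hx1 : x = xv := ex.symm.trans (vyX _ _ hne (g y))
              rw [hx1, hz1] at ey
              exact hy' (ey.symm.trans hys)
            have hx1 : x = xv := by
              by_contra hx'
              have hne : wx (g y) (h z) ≠ xv := fun e => hx' (ex.symm.trans e)
              have hz1 : z = zw := ez.symm.trans (vxZ _ _ hne (f x))
              have hy1' : y = yv := ey.symm.trans (vxY _ _ hne (f x))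
              rw [hy1', hz1] at ex
              exact hx' (ex.symm.trans hxs)
            rw [hx1, hy1] at ez
            exact ⟨hx1, hy1, ez.symm⟩
      · have hzv' : ∀ b, wz (f xv) b = zw := vyZ _ _ hys
        have hxv' : ∀ b, wx b (h zw) = xv := vyX _ _ hys
        refine ⟨(xv, wy (f xv) (h zw), zw), ?_, ?_⟩
        · simp only [Prod.mk.injEq]
          exact ⟨hxv' _, by trivial, hzv' _⟩
        · rintro ⟨x, y, z⟩ hq
          simp only [Prod.mk.injEq] at hq ⊢
          obtain ⟨ex, ey, ez⟩ := hq
          have hz1 : z = zw := by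
            by_contra hz'
            have hne : wz (f x) (g y) ≠ zw := fun e => hz' (ez.symm.trans e)
            have hx1 : x = xv := ex.symm.trans (vzX _ _ hne (h z))
            have hy1 : y = yv := ey.symm.trans (vzY _ _ hne (h z))
            rw [hx1, hy1] at ez
            exact hz' (ez.symm.trans (hzv' _))
          have hx1 : x = xv := by
            by_contra hx'
            have hne : wx (g y) (h z) ≠ xv := fun e => hx' (ex.symm.trans e)
            have hy1 : y = yv := ey.symm.trans (vxY _ _ hne (f x))
            rw [hy1, hz1] at ex
            exact hx' (ex.symm.trans hxs)
          rw [hx1, hz1] at ey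
          exact ⟨hx1, ey.symm, hz1⟩
    · have hzv' : ∀ a, wz a (g yv) = zw := vxZ _ _ hxs
      have hyv' : ∀ a, wy a (h zw) = yv := vxY _ _ hxs
      refine ⟨(wx (g yv) (h zw), yv, zw), ?_, ?_⟩
      · simp only [Prod.mk.injEq]
        exact ⟨by trivial, hyv' _, hzv' _⟩
      · rintro ⟨x, y, z⟩ hq
        simp only [Prod.mk.injEq] at hq ⊢
        obtain ⟨ex, ey, ez⟩ := hq
        have hy1 : y = yv := by
          by_contra hy'
          have hne : wy (f x) (h z) ≠ yv := fun e => hy' (ey.symm.trans e)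
          have hz1 : z = zw := ez.symm.trans (vyZ _ _ hne (g y))
          have hx1 : x = xv := ex.symm.trans (vyX _ _ hne (g y))
          rw [hx1, hz1] at ey
          exact hy' (ey.symm.trans (hyv' _))
        have hz1 : z = zw := by
          by_contra hz'
          have hne : wz (f x) (g y) ≠ zw := fun e => hz' (ez.symm.trans e)
          have hx1 : x = xv := ex.symm.trans (vzX _ _ hne (h z))
          rw [hx1, hy1] at ez
          exact hz' (ez.symm.trans (hzv' _))
        rw [hy1, hz1] at ex
        exact ⟨ex.symm, hy1, hz1⟩
  exact ⟨⟨part1, part2, part3⟩, part4⟩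
end
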